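/- arXiv:2109.02021 — 6 statements merged into one kernel-verified Lean document; each statement's English description precedes it below -/
import Mathlib

section
/- For every even integer k with 0 ≤ k ≤ ⌊D/2⌋ there exists a subspace W of ℂ^X of dimension ⌊D/2⌋ − k + 1 that is invariant under both A and A*, contains no nonzero proper subspace invariant under both A and A*, and has a basis w_0, …, w_{⌊D/2⌋−k} such that for all 0 ≤ i ≤ ⌊D/2⌋−k one has A·w_i = γ_i·w_{i−1} + α_i·w_i + β_i·w_{i+1} and A*·w_i = (D − 2(2i+k))·w_i, where α_i = 2i(D−2i−2k) − k, β_i = (i+1)(2i+1), γ_i = (D−2i−2k+1)(D−2i−2k+2)/2, and by convention w_{−1} = 0 and w_{⌊D/2⌋−k+1} = 0. -/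
open Matrix

/-- Vertex set of the hypercube `H(D,2)`: binary words of length `D`. -/
abbrev Vtx (D : ℕ) := Fin D → ZMod 2

/-- Vertex set of the halved cube: binary words of even Hamming weight. -/
abbrev HVtx (D : ℕ) := {x : Vtx D // Even (hammingNorm x)}

/-- Adjacency matrix of the halved cube `½H(D,2)`. -/
noncomputable def adjHalf (D : ℕ) : Matrix (HVtx D) (HVtx D) ℂ :=
  fun y z => if hammingNorm (y.val - z.val) = 2 then 1 else 0

/-- Dual adjacency matrix of the halved cube with respect to `x₀`. -/
noncomputable def dualHalf (D : ℕ) (x₀ : HVtx D) : Matrix (HVtx D) (HVtx D) ℂ :=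
  Matrix.diagonal fun y => (D : ℂ) - 2 * hammingNorm (x₀.val - y.val)

/-- A submodule is invariant under (the action by `mulVec` of) a matrix. -/
def MatInvariant {n : Type*} [Fintype n] (M : Matrix n n ℂ) (W : Submodule ℂ (n → ℂ)) : Prop :=
  ∀ v ∈ W, M.mulVec v ∈ W

/-!
Measure distances from `x₀` in the whole cube `H(D,2)`. The cube adjacency splits as `L + R`,
where `R` moves a function one sphere outwards and `L` one sphere inwards, and
`L R - R L = D - 2 · dist(x₀, ·)`: an `sl₂`-triple. Since `#S_k = C(D,k) > C(D,k-1) = #S_{k-1}` for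
`2k ≤ D`, some nonzero `h` on the sphere `S_k` satisfies `L h = 0`, and then
`L (R^j h) = j (D - 2k - j + 1) R^(j-1) h`, so `R^j h` is nonzero exactly for `j ≤ D - 2k`.
On even vertices the halved-cube adjacency is `((L + R)² - D) / 2`, which maps `R^(2i) h` into the
span of `R^(2i-2) h, R^(2i) h, R^(2i+2) h`; with `w_i = R^(2i) h / (2i)!` this is the tridiagonal
action of the statement, and `w_i` lives on the sphere `S_{k+2i}` of even vertices (as `k` is even),
where `A*` acts by `D - 2(k + 2i)`. The eigenvalues of `A*` being distinct, an `A*`-invariant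
subspace contains the components of each of its vectors; the nonzero off-diagonal coefficients of
`A` then spread one `w_i` to all of them, which gives irreducibility.
-/

open Finset

section Tridiagonal

variable {K V : Type*} [Field K] [AddCommGroup V] [Module K V]

lemma mem_of_sum_mem_of_apply_eq_smul {ι : Type*} [DecidableEq ι] {B : Module.End K V}
    {θ : ι → K} {U : Submodule K V} (hU : ∀ v ∈ U, B v ∈ U) {s : Finset ι}
    (hθ : Set.InjOn θ s) {w : ι → V} (hw : ∀ i ∈ s, B (w i) = θ i • w i)
    (hsum : ∑ i ∈ s, w i ∈ U) {i : ι} (hi : i ∈ s) : w i ∈ U := by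
  induction s using Finset.induction_on generalizing w i with
  | empty => simp at hi
  | insert a t hat ih =>
    rw [sum_insert hat] at hsum
    -- `B - θ a` kills `w a` and rescales the other eigenvectors by nonzero factors.
    have hshift : ∀ j ∈ t, (θ j - θ a) • w j ∈ U := by
      refine fun j hj => ih (w := fun l => (θ l - θ a) • w l) (hθ.mono (by simp))
        (fun l hl => ?_) ?_ hj
      · rw [map_smul, hw l (mem_insert_of_mem hl), smul_comm]
      · convert U.sub_mem (hU _ hsum) (U.smul_mem (θ a) hsum) using 1
        rw [map_add, map_sum, hw a (mem_insert_self a t), smul_add, smul_sum,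
          sum_congr rfl fun l hl => hw l (mem_insert_of_mem hl), ← sub_sub, add_sub_cancel_left,
          ← sum_sub_distrib]
        exact sum_congr rfl fun l _ => by rw [sub_smul]
    have hmem : ∀ j ∈ t, w j ∈ U := fun j hj =>
      (U.smul_mem_iff (sub_ne_zero.mpr fun h => hat (hθ (mem_insert_of_mem hj)
        (mem_insert_self a t) h ▸ hj))).mp (hshift j hj)
    rcases mem_insert.mp hi with rfl | hi
    · simpa using U.sub_mem hsum (U.sum_mem hmem)
    · exact hmem i hi

lemma mem_and_mem_of_add_mem_of_apply_eq_smul {B : Module.End K V} {U : Submodule K V}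
    (hU : ∀ v ∈ U, B v ∈ U) {u v : V} {a b : K} (hab : a ≠ b) (hu : B u = a • u)
    (hv : B v = b • v) (huv : u + v ∈ U) : u ∈ U ∧ v ∈ U := by
  have hu' : u ∈ U := by
    have h := U.sub_mem (hU _ huv) (U.smul_mem b huv)
    rw [map_add, hu, hv, smul_add, add_sub_add_right_eq_sub, ← sub_smul] at h
    exact (U.smul_mem_iff (sub_ne_zero.mpr hab)).mp h
  exact ⟨hu', by simpa using U.sub_mem huv hu'⟩

lemma apply_mem_span_of_forall_mem {f : Module.End K V} {S : Set V}
    (h : ∀ v ∈ S, f v ∈ Submodule.span K S) :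
    ∀ v ∈ Submodule.span K S, f v ∈ Submodule.span K S :=
  fun _ hv => (Submodule.span_le (p := (Submodule.span K S).comap f)).mpr h hv

variable {A B : Module.End K V} {w : ℕ → V} {n : ℕ} {α β γ θ : ℕ → K}

lemma linearIndependent_of_apply_eq_smul (hθ : Function.Injective θ)
    (hB : ∀ i ≤ n, B (w i) = θ i • w i) (hw : ∀ i ≤ n, w i ≠ 0) :
    LinearIndependent K fun i : Fin (n + 1) => w i :=
  B.eigenvectors_linearIndependent' (fun i : Fin (n + 1) => θ i) (hθ.comp Fin.val_injective) _
    fun i => ⟨Module.End.mem_eigenspace_iff.mpr (hB i (Nat.lt_succ_iff.mp i.2)),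
      hw i (Nat.lt_succ_iff.mp i.2)⟩

lemma finrank_span_image_Iic (hw : LinearIndependent K fun i : Fin (n + 1) => w i) :
    Module.finrank K (Submodule.span K (w '' Set.Iic n)) = n + 1 := by
  have himg : w '' Set.Iic n = Set.range fun i : Fin (n + 1) => w i := by
    rw [← Set.Iio_add_one_eq_Iic, ← Fin.range_val, ← Set.range_comp]
    rfl
  rw [himg, finrank_span_eq_card hw, Fintype.card_fin]

lemma apply_mem_span_of_eigen (hB : ∀ i ≤ n, B (w i) = θ i • w i) :
    ∀ v ∈ Submodule.span K (w '' Set.Iic n), B v ∈ Submodule.span K (w '' Set.Iic n) := by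
  refine apply_mem_span_of_forall_mem ?_
  rintro _ ⟨i, hi, rfl⟩
  rw [hB i hi]
  exact Submodule.smul_mem _ _ (Submodule.subset_span ⟨i, hi, rfl⟩)

section

variable (hA : ∀ i ≤ n, A (w i) = γ i • (if i = 0 then 0 else w (i - 1)) + α i • w i +
    β i • w (i + 1)) (hwn : w (n + 1) = 0)
include hA hwn

lemma apply_mem_span_of_tridiagonal :
    ∀ v ∈ Submodule.span K (w '' Set.Iic n), A v ∈ Submodule.span K (w '' Set.Iic n) := by
  have hmem : ∀ j ≤ n + 1, w j ∈ Submodule.span K (w '' Set.Iic n) := fun j hj => by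
    rcases Nat.le_succ_iff.mp hj with hj | rfl
    · exact Submodule.subset_span ⟨j, hj, rfl⟩
    · rw [hwn]
      exact Submodule.zero_mem _
  refine apply_mem_span_of_forall_mem ?_
  rintro _ ⟨i, hi : i ≤ n, rfl⟩
  rw [hA i hi]
  refine add_mem (add_mem (Submodule.smul_mem _ _ ?_) (Submodule.smul_mem _ _ (hmem i (by omega))))
    (Submodule.smul_mem _ _ (hmem (i + 1) (by omega)))
  split_ifs
  · exact Submodule.zero_mem _
  · exact hmem _ (by omega)

variable (hθ : Function.Injective θ) (hB : ∀ i ≤ n, B (w i) = θ i • w i) {U : Submodule K V}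
  (hUA : ∀ v ∈ U, A v ∈ U) (hUB : ∀ v ∈ U, B v ∈ U)
include hθ hB hUA hUB

lemma neighbours_mem_of_tridiagonal (hβ : ∀ i < n, β i ≠ 0) (hγ : ∀ i ≤ n, i ≠ 0 → γ i ≠ 0)
    {i : ℕ} (hi : i ≤ n) (hwi : w i ∈ U) : (i < n → w (i + 1) ∈ U) ∧ (i ≠ 0 → w (i - 1) ∈ U) := by
  have hsum : γ i • (if i = 0 then 0 else w (i - 1)) + β i • w (i + 1) ∈ U := by
    have h := U.sub_mem (hUA _ hwi) (U.smul_mem (α i) hwi)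
    rwa [hA i hi, add_right_comm, add_sub_cancel_right] at h
  have hprev : B (γ i • (if i = 0 then 0 else w (i - 1))) =
      θ (i - 1) • γ i • (if i = 0 then 0 else w (i - 1)) := by
    split_ifs
    · simp
    · rw [map_smul, hB (i - 1) (by omega), smul_comm]
  have hsucc : B (β i • w (i + 1)) = θ (i + 1) • β i • w (i + 1) := by
    rcases Nat.lt_or_ge i n with hin | hin
    · rw [map_smul, hB (i + 1) hin, smul_comm]
    · rw [show i + 1 = n + 1 by omega, hwn]
      simp
  obtain ⟨hprev, hsucc⟩ := mem_and_mem_of_add_mem_of_apply_eq_smul hUB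
    (hθ.ne (show i - 1 ≠ i + 1 by omega)) hprev hsucc hsum
  refine ⟨fun h => (U.smul_mem_iff (hβ i h)).mp hsucc, fun h => ?_⟩
  rw [if_neg h] at hprev
  exact (U.smul_mem_iff (hγ i hi h)).mp hprev

theorem eq_bot_or_eq_span_of_tridiagonal (hβ : ∀ i < n, β i ≠ 0)
    (hγ : ∀ i ≤ n, i ≠ 0 → γ i ≠ 0) (hUW : U ≤ Submodule.span K (w '' Set.Iic n)) :
    U = ⊥ ∨ U = Submodule.span K (w '' Set.Iic n) := by
  rcases eq_or_ne U ⊥ with hU | hU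
  · exact Or.inl hU
  obtain ⟨v, hvU, hv0⟩ := Submodule.exists_mem_ne_zero_of_ne_bot hU
  obtain ⟨c, rfl⟩ := (Fintype.mem_span_image_iff_exists_fun K).mp (hUW hvU)
  obtain ⟨i, hi⟩ : ∃ i, c i • w i ≠ 0 := by
    by_contra! h
    exact hv0 (sum_eq_zero fun i _ => h i)
  have hwi : w i ∈ U := (U.smul_mem_iff (left_ne_zero_of_smul hi)).mp <|
    mem_of_sum_mem_of_apply_eq_smul (θ := θ ∘ Subtype.val) hUB
      (hθ.comp Subtype.val_injective).injOn
      (fun j _ => by rw [map_smul, hB j j.2, smul_comm, Function.comp_apply]) hvU (mem_univ i)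
  have hneighbours := fun j => neighbours_mem_of_tridiagonal hA hwn hθ hB hUA hUB hβ hγ (i := j)
  have hin : (i : ℕ) ≤ n := i.2
  have hall : ∀ j ≤ n, w j ∈ U := by
    intro j hj
    rcases le_total (i : ℕ) j with h | h
    · induction j, h using Nat.le_induction with
      | base => exact hwi
      | succ j hij ih => exact (hneighbours j (by omega) (ih (by omega))).1 (by omega)
    · exact Nat.decreasingInduction (motive := fun j _ => w j ∈ U)
        (fun j hj hw => by simpa using (hneighbours (j + 1) (by omega) hw).2 (by omega)) hwi h
  refine Or.inr (le_antisymm hUW (Submodule.span_le.mpr ?_))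
  rintro _ ⟨j, hj, rfl⟩
  exact hall j hj

end

end Tridiagonal

namespace HalvedCube

lemma zmod_two_add_one_eq_of_ne {a b : ZMod 2} : a ≠ b → a + 1 = b := by
  revert a b
  decide

variable {D : ℕ}

def flip (j : Fin D) (y : Vtx D) : Vtx D := y + Pi.single j 1

lemma flip_apply (j : Fin D) (y : Vtx D) (i : Fin D) :
    flip j y i = if i = j then y i + 1 else y i := by
  by_cases h : i = j <;> simp [flip, h]

@[simp] lemma flip_flip (j : Fin D) (y : Vtx D) : flip j (flip j y) = y := by
  funext i
  rw [flip_apply, flip_apply]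
  split_ifs
  · generalize y i = a
    revert a
    decide
  · rfl

lemma flip_comm (j l : Fin D) (y : Vtx D) : flip j (flip l y) = flip l (flip j y) := by
  simp only [flip, add_right_comm]

variable (x : Vtx D)

lemma filter_ne_flip_of_eq {j : Fin D} {y : Vtx D} (h : x j = y j) :
    univ.filter (fun l => x l ≠ flip j y l) = insert j (univ.filter fun l => x l ≠ y l) := by
  ext l
  by_cases hl : l = j
  · subst hl
    simp [flip_apply, h]
  · simp [flip_apply, hl]

lemma filter_eq_flip_of_ne {j : Fin D} {y : Vtx D} (h : x j ≠ y j) :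
    univ.filter (fun l => x l = flip j y l) = insert j (univ.filter fun l => x l = y l) := by
  ext l
  by_cases hl : l = j
  · subst hl
    simp [flip_apply, zmod_two_add_one_eq_of_ne h.symm]
  · simp [flip_apply, hl]

lemma hammingDist_flip_of_eq {j : Fin D} {y : Vtx D} (h : x j = y j) :
    hammingDist x (flip j y) = hammingDist x y + 1 := by
  rw [hammingDist, hammingDist, filter_ne_flip_of_eq x h, card_insert_of_notMem (by simp [h])]

lemma hammingDist_flip_of_ne {j : Fin D} {y : Vtx D} (h : x j ≠ y j) :
    hammingDist x (flip j y) + 1 = hammingDist x y := by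
  have h' : x j = flip j y j := by
    rw [flip_apply, if_pos rfl, zmod_two_add_one_eq_of_ne h.symm]
  simpa using (hammingDist_flip_of_eq x h').symm

lemma card_filter_eq_add_hammingDist (y : Vtx D) :
    #(univ.filter fun l => x l = y l) + hammingDist x y = D := by
  rw [hammingDist, card_filter_add_card_filter_not, card_univ, Fintype.card_fin]

noncomputable def lowering : Module.End ℂ (Vtx D → ℂ) where
  toFun f y := ∑ j ∈ univ.filter (fun j => x j = y j), f (flip j y)
  map_add' f g := by
    funext y
    simp [sum_add_distrib]
  map_smul' c f := by
    funext y
    simp [mul_sum]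

noncomputable def raising : Module.End ℂ (Vtx D → ℂ) where
  toFun f y := ∑ j ∈ univ.filter (fun j => x j ≠ y j), f (flip j y)
  map_add' f g := by
    funext y
    simp [sum_add_distrib]
  map_smul' c f := by
    funext y
    simp [mul_sum]

lemma lowering_apply (f : Vtx D → ℂ) (y : Vtx D) :
    lowering x f y = ∑ j ∈ univ.filter (fun j => x j = y j), f (flip j y) := rfl

lemma raising_apply (f : Vtx D → ℂ) (y : Vtx D) :
    raising x f y = ∑ j ∈ univ.filter (fun j => x j ≠ y j), f (flip j y) := rfl

lemma sum_flip_eq_lowering_add_raising (f : Vtx D → ℂ) (y : Vtx D) :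
    ∑ j, f (flip j y) = (lowering x + raising x) f y :=
  (sum_filter_add_sum_filter_not univ (fun j => x j = y j) _).symm

lemma lowering_raising_apply (f : Vtx D → ℂ) (y : Vtx D) :
    lowering x (raising x f) y =
      raising x (lowering x f) y + ((D : ℂ) - 2 * hammingDist x y) * f y := by
  set E := univ.filter fun j => x j = y j
  set N := univ.filter fun j => x j ≠ y j
  have hLR : lowering x (raising x f) y = ∑ j ∈ E, (f y + ∑ l ∈ N, f (flip l (flip j y))) := by
    rw [lowering_apply]
    refine sum_congr rfl fun j hj => ?_
    rw [raising_apply, filter_ne_flip_of_eq x (mem_filter.mp hj).2,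
      sum_insert (by simp [(mem_filter.mp hj).2]), flip_flip]
  have hRL : raising x (lowering x f) y = ∑ j ∈ N, (f y + ∑ l ∈ E, f (flip l (flip j y))) := by
    rw [raising_apply]
    refine sum_congr rfl fun j hj => ?_
    rw [lowering_apply, filter_eq_flip_of_ne x (mem_filter.mp hj).2,
      sum_insert (by simp [(mem_filter.mp hj).2]), flip_flip]
  have hcross : ∑ j ∈ E, ∑ l ∈ N, f (flip l (flip j y)) =
      ∑ j ∈ N, ∑ l ∈ E, f (flip l (flip j y)) := by
    rw [sum_comm]
    simp only [flip_comm]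
  have hE : (#E : ℂ) = D - hammingDist x y := by
    rw [eq_sub_iff_add_eq]
    exact_mod_cast card_filter_eq_add_hammingDist x y
  have hN : (#N : ℂ) = hammingDist x y := rfl
  rw [hLR, hRL, sum_add_distrib, sum_add_distrib, hcross, sum_const, sum_const, nsmul_eq_mul,
    nsmul_eq_mul, hE, hN]
  ring

def SupportedOnSphere (m : ℕ) (f : Vtx D → ℂ) : Prop := ∀ y, hammingDist x y ≠ m → f y = 0

variable {x}

lemma SupportedOnSphere.smul {m : ℕ} {f : Vtx D → ℂ} (hf : SupportedOnSphere x m f) (c : ℂ) :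
    SupportedOnSphere x m (c • f) := fun y hy => by
  simp [hf y hy]

lemma SupportedOnSphere.hammingDist_mul_apply {m : ℕ} {f : Vtx D → ℂ}
    (hf : SupportedOnSphere x m f) (y : Vtx D) :
    (hammingDist x y : ℂ) * f y = m * f y := by
  by_cases hy : hammingDist x y = m
  · rw [hy]
  · rw [hf y hy, mul_zero, mul_zero]

lemma SupportedOnSphere.eq_zero_of_lt {m : ℕ} {f : Vtx D → ℂ} (hf : SupportedOnSphere x m f)
    (hm : D < m) : f = 0 := by
  funext y
  have hy : hammingDist x y ≤ D := by
    simpa only [Fintype.card_fin] using hammingDist_le_card_fintype (x := x) (y := y)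
  exact hf y (by omega)

lemma SupportedOnSphere.lowering_apply_eq_zero {m : ℕ} {f : Vtx D → ℂ}
    (hf : SupportedOnSphere x m f) {y : Vtx D} (hy : hammingDist x y + 1 ≠ m) :
    lowering x f y = 0 := by
  rw [lowering_apply]
  exact sum_eq_zero fun j hj => hf _ (by rwa [hammingDist_flip_of_eq x (mem_filter.mp hj).2])

lemma supportedOnSphere_raising {m : ℕ} {f : Vtx D → ℂ} (hf : SupportedOnSphere x m f) :
    SupportedOnSphere x (m + 1) (raising x f) := fun y hy => by
  rw [raising_apply]
  refine sum_eq_zero fun j hj => hf _ ?_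
  have := hammingDist_flip_of_ne x (mem_filter.mp hj).2
  omega

lemma supportedOnSphere_raising_pow {m : ℕ} {f : Vtx D → ℂ} (hf : SupportedOnSphere x m f)
    (j : ℕ) : SupportedOnSphere x (m + j) ((raising x ^ j) f) := by
  induction j with
  | zero => exact hf
  | succ j ih =>
    rw [pow_succ', Module.End.mul_apply]
    exact supportedOnSphere_raising ih

variable (x)

lemma card_sphere (m : ℕ) :
    #(univ.filter fun y : Vtx D => hammingDist x y = m) = D.choose m := by
  have hchoose : D.choose m = #(powersetCard m (univ : Finset (Fin D))) := by simp
  rw [hchoose]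
  refine card_nbij' (fun y => univ.filter fun l => x l ≠ y l)
    (fun s l => x l + if l ∈ s then 1 else 0) ?_ ?_ ?_ ?_
  · intro y hy
    simpa [mem_powersetCard, hammingDist] using hy
  · intro s hs
    have hs' : univ.filter (fun l => x l ≠ x l + if l ∈ s then 1 else 0) = s := by
      ext l
      by_cases hl : l ∈ s <;> simp [hl]
    simpa [hammingDist, hs'] using (mem_powersetCard.mp hs).2
  · intro y _
    funext l
    by_cases hl : x l = y l
    · simp [hl]
    · simp [hl, zmod_two_add_one_eq_of_ne hl]
  · intro s _
    ext l
    by_cases hl : l ∈ s <;> simp [hl]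

lemma card_filter_hammingDist_add_one_lt {m : ℕ} (hm : 2 * m ≤ D) :
    #(univ.filter fun y : Vtx D => hammingDist x y + 1 = m) <
      #(univ.filter fun y : Vtx D => hammingDist x y = m) := by
  rw [card_sphere]
  cases m with
  | zero => simp
  | succ m =>
    simp only [add_left_inj, card_sphere]
    have hpos := Nat.choose_pos (show m ≤ D by omega)
    have h := Nat.choose_succ_right_eq D m
    by_contra! hle
    have : D.choose m * (D - m) ≤ D.choose m * (m + 1) := by nlinarith
    have := Nat.le_of_mul_le_mul_left this hpos
    omega

theorem exists_lowering_eq_zero {m : ℕ} (hm : 2 * m ≤ D) :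
    ∃ h : Vtx D → ℂ, h ≠ 0 ∧ SupportedOnSphere x m h ∧ lowering x h = 0 := by
  let S := {y : Vtx D // hammingDist x y = m}
  let T := {y : Vtx D // hammingDist x y + 1 = m}
  let Φ : (S → ℂ) →ₗ[ℂ] (T → ℂ) := LinearMap.funLeft ℂ ℂ Subtype.val ∘ₗ lowering x ∘ₗ
    Function.ExtendByZero.linearMap ℂ Subtype.val
  have hdim : Module.finrank ℂ (T → ℂ) < Module.finrank ℂ (S → ℂ) := by
    rw [Module.finrank_fintype_fun_eq_card, Module.finrank_fintype_fun_eq_card,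
      Fintype.card_subtype, Fintype.card_subtype]
    exact card_filter_hammingDist_add_one_lt x hm
  obtain ⟨g, hg, hg0⟩ :=
    Submodule.exists_mem_ne_zero_of_ne_bot (LinearMap.ker_ne_bot_of_finrank_lt (f := Φ) hdim)
  let h : Vtx D → ℂ := Function.extend (Subtype.val : S → Vtx D) g 0
  have hS : SupportedOnSphere x m h := fun y hy =>
    Function.extend_apply' _ _ _ (by rintro ⟨z, rfl⟩; exact hy z.2)
  refine ⟨h, fun h0 => hg0 ?_, hS, ?_⟩
  · funext y
    simpa [h, Subtype.val_injective.extend_apply] using congrFun h0 y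
  · funext y
    by_cases hy : hammingDist x y + 1 = m
    · exact congrFun (LinearMap.mem_ker.mp hg) ⟨y, hy⟩
    · exact hS.lowering_apply_eq_zero hy

def stringCoeff (D m j : ℕ) : ℂ := j * ((D : ℂ) - 2 * m - j + 1)

lemma stringCoeff_ne_zero {D m j : ℕ} (hj : j ≠ 0) (h : (D : ℤ) + 1 ≠ 2 * m + j) :
    stringCoeff D m j ≠ 0 := by
  have hcast : (D : ℂ) - 2 * m - j + 1 = ((D + 1 - 2 * m - j : ℤ) : ℂ) := by
    push_cast
    ring
  rw [stringCoeff, hcast]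
  exact mul_ne_zero (by exact_mod_cast hj) (Int.cast_ne_zero.mpr (by omega))

lemma stringCoeff_smul_raising_pow_pred (m j : ℕ) (f : Vtx D → ℂ) :
    stringCoeff D m j • raising x ((raising x ^ (j - 1)) f) =
      stringCoeff D m j • (raising x ^ j) f := by
  rcases j with _ | j
  · simp [stringCoeff]
  · rw [Nat.add_sub_cancel, ← Module.End.mul_apply, ← pow_succ']

section String

variable {x} {m : ℕ} {h : Vtx D → ℂ} (hL : lowering x h = 0) (hS : SupportedOnSphere x m h)
include hL hS

lemma lowering_raising_pow (j : ℕ) :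
    lowering x ((raising x ^ j) h) = stringCoeff D m j • (raising x ^ (j - 1)) h := by
  induction j with
  | zero => simp [hL, stringCoeff]
  | succ j ih =>
    funext y
    rw [pow_succ', Module.End.mul_apply, lowering_raising_apply, ih, map_smul,
      stringCoeff_smul_raising_pow_pred, Nat.add_sub_cancel, Pi.smul_apply, smul_eq_mul, sub_mul,
      mul_assoc, (supportedOnSphere_raising_pow hS j).hammingDist_mul_apply, Pi.smul_apply,
      smul_eq_mul, stringCoeff, stringCoeff]
    push_cast
    ring

lemma eq_zero_of_lowering_eq_zero (hm : D < 2 * m) : h = 0 := by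
  have hstep : ∀ j, (raising x ^ (j + 1)) h = 0 → (raising x ^ j) h = 0 := by
    intro j hj
    have hc := lowering_raising_pow hL hS (j + 1)
    rw [hj, map_zero, Nat.add_sub_cancel, eq_comm, smul_eq_zero] at hc
    exact hc.resolve_left (stringCoeff_ne_zero (by omega) (by omega))
  have htop : (raising x ^ (D + 1)) h = 0 :=
    (supportedOnSphere_raising_pow hS (D + 1)).eq_zero_of_lt (by omega)
  simpa using Nat.decreasingInduction (motive := fun j _ => (raising x ^ j) h = 0)
    (fun j _ => hstep j) htop (Nat.zero_le _)

lemma raising_pow_eq_zero (hm : 2 * m ≤ D) {j : ℕ} (hj : D - 2 * m < j) :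
    (raising x ^ j) h = 0 := by
  set N := D - 2 * m + 1
  have hN : (raising x ^ N) h = 0 := by
    refine eq_zero_of_lowering_eq_zero ?_ (supportedOnSphere_raising_pow hS N) (by omega)
    have hc : stringCoeff D m N = 0 := by
      rw [stringCoeff, Nat.cast_add, Nat.cast_sub hm]
      push_cast
      ring
    rw [lowering_raising_pow hL hS, hc, zero_smul]
  obtain ⟨d, rfl⟩ := Nat.exists_eq_add_of_le' (show N ≤ j by omega)
  rw [pow_add, Module.End.mul_apply, hN, map_zero]

lemma raising_pow_ne_zero (hh : h ≠ 0) {j : ℕ} (hj : j ≤ D - 2 * m) :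
    (raising x ^ j) h ≠ 0 := by
  induction j with
  | zero => simpa using hh
  | succ j ih =>
    intro hz
    have hc := lowering_raising_pow hL hS (j + 1)
    rw [hz, map_zero, Nat.add_sub_cancel, eq_comm, smul_eq_zero] at hc
    exact hc.elim (stringCoeff_ne_zero (by omega) (by omega)) (ih (by omega))

lemma lowering_add_raising_sq_raising_pow (j : ℕ) :
    (lowering x + raising x) ((lowering x + raising x) ((raising x ^ j) h)) =
      (stringCoeff D m j * stringCoeff D m (j - 1)) • (raising x ^ (j - 2)) h +
      (stringCoeff D m (j + 1) + stringCoeff D m j) • (raising x ^ j) h +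
      (raising x ^ (j + 2)) h := by
  have hLL : lowering x (lowering x ((raising x ^ j) h)) =
      (stringCoeff D m j * stringCoeff D m (j - 1)) • (raising x ^ (j - 2)) h := by
    rw [lowering_raising_pow hL hS j, map_smul, lowering_raising_pow hL hS (j - 1), smul_smul,
      Nat.sub_sub]
  have hLR : lowering x (raising x ((raising x ^ j) h)) =
      stringCoeff D m (j + 1) • (raising x ^ j) h := by
    rw [← Module.End.mul_apply (raising x), ← pow_succ', lowering_raising_pow hL hS,
      Nat.add_sub_cancel]
  have hRL : raising x (lowering x ((raising x ^ j) h)) =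
      stringCoeff D m j • (raising x ^ j) h := by
    rw [lowering_raising_pow hL hS, map_smul, stringCoeff_smul_raising_pow_pred]
  have hRR : raising x (raising x ((raising x ^ j) h)) = (raising x ^ (j + 2)) h := by
    rw [pow_succ', pow_succ', Module.End.mul_apply, Module.End.mul_apply]
  simp only [LinearMap.add_apply, map_add, hLL, hLR, hRL, hRR]
  module

end String

lemma filter_ne_flip_flip (y : Vtx D) {j l : Fin D} (hjl : j ≠ l) :
    univ.filter (fun i => y i ≠ flip l (flip j y) i) = {l, j} := by
  rw [filter_ne_flip_of_eq y (by rw [flip_apply, if_neg hjl.symm]),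
    filter_ne_flip_of_eq y (j := j) rfl]
  simp

lemma eq_of_filter_ne_eq {y z z' : Vtx D}
    (h : univ.filter (fun i => y i ≠ z i) = univ.filter (fun i => y i ≠ z' i)) : z = z' := by
  funext i
  have hi := congrArg (i ∈ ·) h
  simp only [mem_filter, mem_univ, true_and, eq_iff_iff] at hi
  by_cases hz : y i = z i
  · rw [← hz, not_not.mp ((not_congr hi).mp (not_not.mpr hz))]
  · rw [← zmod_two_add_one_eq_of_ne hz, zmod_two_add_one_eq_of_ne (hi.mp hz)]

lemma card_filter_offDiag_flip_flip {y z : Vtx D} (hz : hammingDist y z = 2) :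
    #(univ.offDiag.filter fun p : Fin D × Fin D => flip p.2 (flip p.1 y) = z) = 2 := by
  set S := univ.filter fun i => y i ≠ z i
  have hS : #S = 2 := hz
  have hfiber : (univ.offDiag.filter fun p : Fin D × Fin D => flip p.2 (flip p.1 y) = z) =
      S.offDiag := by
    ext ⟨j, l⟩
    simp only [mem_filter, mem_offDiag, mem_univ, true_and]
    constructor
    · rintro ⟨hjl, rfl⟩
      simp [S, filter_ne_flip_flip y hjl, hjl]
    · rintro ⟨hj, hl, hjl⟩
      have hSjl : S = {l, j} := (eq_of_subset_of_card_le (by simp [insert_subset_iff, hj, hl])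
        (by rw [hS, card_pair hjl.symm])).symm
      exact ⟨hjl, eq_of_filter_ne_eq (by rw [filter_ne_flip_flip y hjl, ← hSjl])⟩
  rw [hfiber, offDiag_card, hS]

lemma sum_sum_flip_flip (f : Vtx D → ℂ) (y : Vtx D) :
    ∑ j, ∑ l, f (flip l (flip j y)) =
      D * f y + 2 * ∑ z ∈ univ.filter (fun z => hammingDist y z = 2), f z := by
  have hdiag : ∑ p ∈ (univ : Finset (Fin D)).diag, f (flip p.2 (flip p.1 y)) = D * f y := by
    rw [sum_congr rfl fun p hp => by rw [← (mem_diag.mp hp).2, flip_flip], sum_const, diag_card,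
      card_univ, Fintype.card_fin, nsmul_eq_mul]
  have hoff : ∑ p ∈ (univ : Finset (Fin D)).offDiag, f (flip p.2 (flip p.1 y)) =
      2 * ∑ z ∈ univ.filter (fun z => hammingDist y z = 2), f z := by
    rw [← sum_fiberwise_of_maps_to (g := fun p : Fin D × Fin D => flip p.2 (flip p.1 y))
      (t := univ.filter fun z => hammingDist y z = 2), mul_sum]
    · refine sum_congr rfl fun z hz => ?_
      rw [sum_congr rfl fun p hp => by rw [(mem_filter.mp hp).2], sum_const,
        card_filter_offDiag_flip_flip (mem_filter.mp hz).2, two_nsmul, two_mul]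
    · intro p hp
      obtain ⟨-, -, hp⟩ := mem_offDiag.mp hp
      simp [hammingDist, filter_ne_flip_flip y hp, card_pair (Ne.symm hp)]
  rw [← hdiag, ← hoff, ← sum_union (disjoint_diag_offDiag _), diag_union_offDiag, sum_product]

lemma hammingNorm_sub (y z : Vtx D) : hammingNorm (y - z) = hammingDist y z := by
  rw [hammingDist_comm, hammingDist_eq_hammingNorm, neg_add_eq_sub]

lemma natCast_hammingNorm (v : Vtx D) : (hammingNorm v : ZMod 2) = ∑ i, v i := by
  have hv : ∀ i, v i = if v i ≠ 0 then 1 else 0 := fun i => by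
    generalize v i = a
    revert a
    decide
  rw [sum_congr rfl fun i _ => hv i, sum_boole]
  rfl

lemma even_hammingNorm_iff_of_even_hammingDist {y z : Vtx D} (h : Even (hammingDist y z)) :
    Even (hammingNorm z) ↔ Even (hammingNorm y) := by
  rw [← ZMod.natCast_eq_zero_iff_even, hammingDist_eq_hammingNorm, natCast_hammingNorm] at h
  simp only [Pi.add_apply, Pi.neg_apply, sum_add_distrib, sum_neg_distrib, neg_add_eq_zero] at h
  rw [← ZMod.natCast_eq_zero_iff_even, ← ZMod.natCast_eq_zero_iff_even, natCast_hammingNorm,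
    natCast_hammingNorm, h]

lemma adjHalf_mulVec_comp_val (f : Vtx D → ℂ) (y : HVtx D) :
    (adjHalf D *ᵥ (f ∘ Subtype.val)) y =
      ((lowering x + raising x) ((lowering x + raising x) f) y.val - D * f y.val) / 2 := by
  have hsphere : ∑ z ∈ univ.filter (fun z => hammingDist y.val z = 2), f z =
      (adjHalf D *ᵥ (f ∘ Subtype.val)) y := calc
    _ = ∑ z ∈ univ.filter (fun z : Vtx D => Even (hammingNorm z)),
          if hammingDist y.val z = 2 then f z else 0 := by
      rw [sum_filter, sum_filter]
      refine sum_congr rfl fun z _ => ?_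
      by_cases hz : hammingDist y.val z = 2
      · simp [hz, (even_hammingNorm_iff_of_even_hammingDist (hz ▸ even_two)).mpr y.2]
      · simp [hz]
    _ = ∑ z : HVtx D, if hammingDist y.val z.val = 2 then f z.val else 0 :=
      sum_subtype _ (fun z => by simp) _
    _ = _ := by simp [mulVec, dotProduct, adjHalf, hammingNorm_sub]
  have hsq : (lowering x + raising x) ((lowering x + raising x) f) y.val =
      ∑ j, ∑ l, f (flip l (flip j y.val)) := by
    simp only [← sum_flip_eq_lowering_add_raising]
  rw [hsq, sum_sum_flip_flip, ← hsphere]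
  ring

lemma dualHalf_mulVec_comp_val {x₀ : HVtx D} {m : ℕ} {f : Vtx D → ℂ}
    (hf : SupportedOnSphere x₀.val m f) :
    dualHalf D x₀ *ᵥ (f ∘ Subtype.val) = ((D : ℂ) - 2 * m) • (f ∘ Subtype.val) := by
  funext y
  simp only [dualHalf, mulVec_diagonal, hammingNorm_sub, Function.comp_apply, Pi.smul_apply,
    smul_eq_mul, sub_mul, mul_assoc, hf.hammingDist_mul_apply]

noncomputable def stringVec (h : Vtx D → ℂ) (i : ℕ) : HVtx D → ℂ :=
  (((2 * i).factorial : ℂ)⁻¹ • (raising x ^ (2 * i)) h) ∘ Subtype.val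

lemma cast_factorial_two_mul_succ (i : ℕ) :
    ((2 * (i + 1)).factorial : ℂ) = (2 * i + 2) * (2 * i + 1) * (2 * i).factorial := by
  rw [show 2 * (i + 1) = 2 * i + 1 + 1 by ring, Nat.factorial_succ, Nat.factorial_succ]
  push_cast
  ring

section StringVec

variable {x} {k : ℕ} {h : Vtx D → ℂ} (hL : lowering x h = 0) (hS : SupportedOnSphere x k h)
include hL hS

lemma adjHalf_mulVec_stringVec (i : ℕ) :
    adjHalf D *ᵥ stringVec x h i =
      ((((D : ℂ) - 2 * i - 2 * k + 1) * ((D : ℂ) - 2 * i - 2 * k + 2)) / 2) •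
        (if i = 0 then 0 else stringVec x h (i - 1)) +
      (2 * (i : ℂ) * ((D : ℂ) - 2 * i - 2 * k) - k) • stringVec x h i +
      (((i : ℂ) + 1) * (2 * i + 1)) • stringVec x h (i + 1) := by
  funext y
  have hsq := congrFun (lowering_add_raising_sq_raising_pow hL hS (2 * i)) y.val
  simp only [Pi.add_apply, Pi.smul_apply, smul_eq_mul] at hsq
  rw [stringVec, adjHalf_mulVec_comp_val x, map_smul, map_smul, Pi.smul_apply, hsq]
  rcases i with _ | i
  · simp only [stringVec, stringCoeff, Pi.add_apply, Pi.smul_apply, Function.comp_apply,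
      smul_eq_mul, if_pos, Pi.zero_apply, Nat.mul_zero, Nat.zero_add, Nat.factorial_zero,
      Nat.zero_sub, pow_zero, Module.End.one_apply]
    push_cast
    ring
  · simp only [stringVec, if_neg (Nat.succ_ne_zero i), Pi.add_apply, Pi.smul_apply,
      Function.comp_apply, smul_eq_mul]
    rw [show 2 * (i + 1) - 2 = 2 * i by omega, show 2 * (i + 1) - 1 = 2 * i + 1 by omega,
      show 2 * (i + 1) + 2 = 2 * (i + 1 + 1) by ring, show i + 1 - 1 = i by omega,
      cast_factorial_two_mul_succ (i + 1), cast_factorial_two_mul_succ i, stringCoeff,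
      stringCoeff, stringCoeff]
    have h1 : (2 * (i : ℂ) + 1) ≠ 0 := by exact_mod_cast (2 * i).succ_ne_zero
    have h3 : (2 * ((i : ℂ) + 1) + 1) ≠ 0 := by exact_mod_cast (2 * (i + 1)).succ_ne_zero
    have h5 : ((i : ℂ) + 1 + 1) ≠ 0 := by exact_mod_cast (i + 1).succ_ne_zero
    push_cast
    field_simp
    ring

lemma stringVec_eq_zero (hk : 2 * k ≤ D) {i : ℕ} (hi : D - 2 * k < 2 * i) :
    stringVec x h i = 0 := by
  rw [stringVec, raising_pow_eq_zero hL hS hk hi, smul_zero]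
  rfl

end StringVec

lemma dualHalf_mulVec_stringVec {x₀ : HVtx D} {k : ℕ} {h : Vtx D → ℂ}
    (hS : SupportedOnSphere x₀.val k h) (i : ℕ) :
    dualHalf D x₀ *ᵥ stringVec x₀.val h i =
      ((D : ℂ) - 2 * (2 * i + k)) • stringVec x₀.val h i := by
  rw [stringVec, dualHalf_mulVec_comp_val ((supportedOnSphere_raising_pow hS (2 * i)).smul _)]
  push_cast
  ring_nf

lemma stringVec_ne_zero {x₀ : HVtx D} {k : ℕ} {h : Vtx D → ℂ} (hL : lowering x₀.val h = 0)
    (hS : SupportedOnSphere x₀.val k h) (hh : h ≠ 0) (hk : Even k) {i : ℕ}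
    (hi : 2 * i ≤ D - 2 * k) : stringVec x₀.val h i ≠ 0 := by
  obtain ⟨z, hz⟩ := Function.ne_iff.mp (raising_pow_ne_zero hL hS hh hi)
  have hdist : hammingDist x₀.val z = k + 2 * i := by
    by_contra hne
    exact hz (supportedOnSphere_raising_pow hS (2 * i) z hne)
  have heven : Even (hammingNorm z) :=
    (even_hammingNorm_iff_of_even_hammingDist (hdist ▸ hk.add (even_two_mul i))).mpr x₀.2
  intro h0
  have hz0 := congrFun h0 ⟨z, heven⟩
  simp only [stringVec, Function.comp_apply, Pi.smul_apply, smul_eq_mul, Pi.zero_apply,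
    mul_eq_zero, inv_eq_zero, Nat.cast_eq_zero, Nat.factorial_ne_zero, false_or] at hz0
  exact hz hz0

lemma adjCoeff_ne_zero {D i k : ℕ} (h : 2 * i + 2 * k ≤ D) :
    ((D : ℂ) - 2 * i - 2 * k + 1) * ((D : ℂ) - 2 * i - 2 * k + 2) / 2 ≠ 0 := by
  obtain ⟨d, rfl⟩ := Nat.exists_eq_add_of_le h
  have hd : ((2 * i + 2 * k + d : ℕ) : ℂ) - 2 * i - 2 * k = d := by
    push_cast
    ring
  rw [hd]
  exact div_ne_zero (mul_ne_zero (by exact_mod_cast d.succ_ne_zero)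
    (by exact_mod_cast (d + 1).succ_ne_zero)) two_ne_zero

end HalvedCube

theorem stmt0_general (D : ℕ) (x₀ : HVtx D) (k : ℕ) (hk : Even k) (hkD : k ≤ D / 2) :
    ∃ W : Submodule ℂ (HVtx D → ℂ),
      Module.finrank ℂ W = D / 2 - k + 1 ∧
      MatInvariant (adjHalf D) W ∧
      MatInvariant (dualHalf D x₀) W ∧
      (∀ U : Submodule ℂ (HVtx D → ℂ), U ≤ W →
        MatInvariant (adjHalf D) U → MatInvariant (dualHalf D x₀) U → U = ⊥ ∨ U = W) ∧
      ∃ w : ℕ → (HVtx D → ℂ),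
        (∀ i ≤ D / 2 - k, w i ∈ W) ∧
        LinearIndependent ℂ (fun i : Fin (D / 2 - k + 1) => w i) ∧
        Submodule.span ℂ (w '' Set.Iic (D / 2 - k)) = W ∧
        w (D / 2 - k + 1) = 0 ∧
        (∀ i ≤ D / 2 - k,
          (adjHalf D).mulVec (w i) =
            ((((D : ℂ) - 2 * i - 2 * k + 1) * ((D : ℂ) - 2 * i - 2 * k + 2)) / 2) •
              (if i = 0 then 0 else w (i - 1)) +
            (2 * (i : ℂ) * ((D : ℂ) - 2 * i - 2 * k) - k) • w i +
            (((i : ℂ) + 1) * (2 * i + 1)) • w (i + 1)) ∧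
        (∀ i ≤ D / 2 - k,
          (dualHalf D x₀).mulVec (w i) = ((D : ℂ) - 2 * (2 * i + k)) • w i) := by
  obtain ⟨h, hh, hS, hL⟩ := HalvedCube.exists_lowering_eq_zero x₀.val (m := k) (by omega)
  set w := HalvedCube.stringVec x₀.val h
  have hA : ∀ i ≤ D / 2 - k, (adjHalf D).mulVecLin (w i) = _ := fun i _ =>
    HalvedCube.adjHalf_mulVec_stringVec hL hS i
  have hB : ∀ i ≤ D / 2 - k, (dualHalf D x₀).mulVecLin (w i) = _ := fun i _ =>
    HalvedCube.dualHalf_mulVec_stringVec hS i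
  have hwn : w (D / 2 - k + 1) = 0 := HalvedCube.stringVec_eq_zero hL hS (by omega) (by omega)
  have hθ : Function.Injective fun i : ℕ => (D : ℂ) - 2 * (2 * i + k) := fun i j hij => by
    have hij' : (i : ℂ) = j := by linear_combination -hij / 4
    exact_mod_cast hij'
  have hβ : ∀ i : ℕ, ((i : ℂ) + 1) * (2 * i + 1) ≠ 0 := fun i =>
    mul_ne_zero (by exact_mod_cast i.succ_ne_zero) (by exact_mod_cast (2 * i).succ_ne_zero)
  have hli := linearIndependent_of_apply_eq_smul hθ hB fun i _ =>
    HalvedCube.stringVec_ne_zero hL hS hh hk (by omega)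
  refine ⟨_, finrank_span_image_Iic hli, apply_mem_span_of_tridiagonal hA hwn,
    apply_mem_span_of_eigen hB, fun U hUW hUA hUB =>
      eq_bot_or_eq_span_of_tridiagonal hA hwn hθ hB hUA hUB (fun i _ => hβ i)
        (fun i hi _ => HalvedCube.adjCoeff_ne_zero (by omega)) hUW,
    w, fun i hi => Submodule.subset_span ⟨i, hi, rfl⟩, hli, rfl, hwn, hA, hB⟩

theorem stmt0 (D : ℕ) (hD : 3 ≤ D) (x₀ : HVtx D) (k : ℕ) (hk : Even k) (hkD : k ≤ D / 2) :
    ∃ W : Submodule ℂ (HVtx D → ℂ),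
      Module.finrank ℂ W = D / 2 - k + 1 ∧
      MatInvariant (adjHalf D) W ∧
      MatInvariant (dualHalf D x₀) W ∧
      (∀ U : Submodule ℂ (HVtx D → ℂ), U ≤ W →
        MatInvariant (adjHalf D) U → MatInvariant (dualHalf D x₀) U → U = ⊥ ∨ U = W) ∧
      ∃ w : ℕ → (HVtx D → ℂ),
        (∀ i ≤ D / 2 - k, w i ∈ W) ∧
        LinearIndependent ℂ (fun i : Fin (D / 2 - k + 1) => w i) ∧
        Submodule.span ℂ (w '' Set.Iic (D / 2 - k)) = W ∧
        w (D / 2 - k + 1) = 0 ∧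
        (∀ i ≤ D / 2 - k,
          (adjHalf D).mulVec (w i) =
            ((((D : ℂ) - 2 * i - 2 * k + 1) * ((D : ℂ) - 2 * i - 2 * k + 2)) / 2) •
              (if i = 0 then 0 else w (i - 1)) +
            (2 * (i : ℂ) * ((D : ℂ) - 2 * i - 2 * k) - k) • w i +
            (((i : ℂ) + 1) * (2 * i + 1)) • w (i + 1)) ∧
        (∀ i ≤ D / 2 - k,
          (dualHalf D x₀).mulVec (w i) = ((D : ℂ) - 2 * (2 * i + k)) • w i) :=
  stmt0_general D x₀ k hk hkD
end

section
/- For every even integer k with 2 ≤ k ≤ ⌈D/2⌉ there exists a subspace W of ℂ^X of dimension ⌈D/2⌉ − k + 1 that is invariant under both A and A*, contains no nonzero proper subspace invariant under both A and A*, and has a basis w_0, …, w_{⌈D/2⌉−k} such that for all 0 ≤ i ≤ ⌈D/2⌉−k one has A·w_i = γ_i·w_{i−1} + α_i·w_i + β_i·w_{i+1} and A*·w_i = (D − 2(2i+k))·w_i, where α_i = (2i+1)(D−2i−2k+1) − k + 1, β_i = (i+1)(2i+3), γ_i = (D−2i−2k+2)(D−2i−2k+3)/2, and by convention w_{−1}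 = 0 and w_{⌈D/2⌉−k+1} = 0. -/
open Matrix

/-!
Put `r = k - 1` and split the coordinates into `r` pairs `(2t, 2t+1)` and a tail of length
`D - 2r`. The adjacency operator `A_H` of the cube `H(D,2)` kills `e₀₁ - e₁₀` on every pair, so on
the vectors `(e₀₁ - e₁₀)^{⊗ r} ⊗ 𝟙[tail weight = m]` it acts as the adjacency operator of
`H(D - 2r, 2)` on its weight shells. Since `A_H² = D + 2 A₂` with `A₂` the distance-`2` operator,
which restricts to the adjacency matrix of the halved cube, the vectors `w i` (the case
`m = 2i + 1`, translated by `x₀`) satisfy the three-term recurrence. They are supported at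
distance `k + 2i` from `x₀`, hence are `A*`-eigenvectors with distinct eigenvalues, and since `k` is
even they do not vanish on `X`. A nonzero subspace of their span invariant under `A*` contains
one of them, and the nonzero off-diagonal coefficients of `A` then force it to contain all of them.
-/

open Submodule

section Tridiagonal

variable {K V : Type*} [Field K] [AddCommGroup V] [Module K V]
  {B : Module.End K V} {p : Submodule K V}

theorem Submodule.mem_of_add_mem_of_eigenvectors (hp : ∀ v ∈ p, B v ∈ p) {x y : V} {a b : K}
    (hab : a ≠ b) (hx : B x = a • x) (hy : B y = b • y) (hxy : x + y ∈ p) : x ∈ p := by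
  have h : B (x + y) - b • (x + y) = (a - b) • x := by
    rw [map_add, hx, hy, sub_smul, smul_add]; abel
  exact (p.smul_mem_iff (sub_ne_zero.2 hab)).1 (h ▸ p.sub_mem (hp _ hxy) (p.smul_mem b hxy))

theorem Submodule.mem_of_sum_mem_of_eigenvectors {ι : Type*} [DecidableEq ι]
    (hp : ∀ v ∈ p, B v ∈ p) {θ : ι → K} {v : ι → V} (hv : ∀ i, B (v i) = θ i • v i)
    {s : Finset ι} (hθ : Set.InjOn θ s) (hs : ∑ i ∈ s, v i ∈ p) : ∀ i ∈ s, v i ∈ p := by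
  induction s using Finset.induction_on generalizing v with
  | empty => simp
  | insert j s hj ih =>
    have hθj : ∀ i ∈ s, θ i - θ j ≠ 0 := fun i hi h =>
      hj (hθ (by simp [hi]) (by simp) (sub_eq_zero.1 h) ▸ hi)
    have hkill : B (∑ i ∈ insert j s, v i) - θ j • ∑ i ∈ insert j s, v i =
        ∑ i ∈ s, (θ i - θ j) • v i := by
      simp only [Finset.sum_insert hj, map_add, map_sum, hv, smul_add, Finset.smul_sum, sub_smul,
        Finset.sum_sub_distrib]
      abel
    have hrest : ∀ i ∈ s, v i ∈ p := fun i hi =>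
      (p.smul_mem_iff (hθj i hi)).1 <| ih (v := fun i => (θ i - θ j) • v i)
        (fun i => by rw [map_smul, hv, smul_comm]) (hθ.mono (by simp))
        (hkill ▸ p.sub_mem (hp _ hs) (p.smul_mem _ hs)) i hi
    intro i hi
    rcases Finset.mem_insert.1 hi with rfl | hi
    · rw [Finset.sum_insert hj] at hs
      simpa using p.sub_mem hs (p.sum_mem hrest)
    · exact hrest i hi

theorem Submodule.apply_mem_span_image_of_eigenvectors {ι : Type*} {w : ι → V} {s : Set ι}
    {θ : ι → K} (hB : ∀ i ∈ s, B (w i) = θ i • w i) :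
    ∀ v ∈ span K (w '' s), B v ∈ span K (w '' s) := fun _ hv =>
  (span_le (p := (span K (w '' s)).comap B)).2
    (by
      rintro _ ⟨i, hi, rfl⟩
      rw [SetLike.mem_coe, mem_comap, hB i hi]
      exact smul_mem _ _ (subset_span ⟨i, hi, rfl⟩)) hv

theorem Submodule.apply_mem_span_image_Iic_of_tridiagonal {A : Module.End K V} {w : ℕ → V} {N : ℕ}
    {α β γ : ℕ → K}
    (hA : ∀ i ≤ N,
      A (w i) = γ i • (if i = 0 then 0 else w (i - 1)) + α i • w i + β i • w (i + 1))
    (hwN : w (N + 1) = 0) :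
    ∀ v ∈ span K (w '' Set.Iic N), A v ∈ span K (w '' Set.Iic N) := by
  have hw : ∀ i ≤ N + 1, w i ∈ span K (w '' Set.Iic N) := fun i hi => by
    rcases Nat.lt_or_eq_of_le hi with hi | rfl
    · exact subset_span ⟨i, Nat.lt_succ_iff.1 hi, rfl⟩
    · exact hwN ▸ zero_mem _
  refine fun _ hv => (span_le (p := (span K (w '' Set.Iic N)).comap A)).2 ?_ hv
  rintro _ ⟨i, hi : i ≤ N, rfl⟩
  rw [SetLike.mem_coe, mem_comap, hA i hi]
  refine add_mem (add_mem (smul_mem _ _ ?_) (smul_mem _ _ (hw i (by omega))))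
    (smul_mem _ _ (hw (i + 1) (by omega)))
  split_ifs
  exacts [zero_mem _, hw (i - 1) (by omega)]

theorem Submodule.eq_bot_or_eq_span_of_tridiagonal {A : Module.End K V} {w : ℕ → V} {N : ℕ}
    {θ α β γ : ℕ → K} (hθ : Function.Injective θ) (hB : ∀ i, B (w i) = θ i • w i)
    (hA : ∀ i ≤ N,
      A (w i) = γ i • (if i = 0 then 0 else w (i - 1)) + α i • w i + β i • w (i + 1))
    (hβ : ∀ i < N, β i ≠ 0) (hγ : ∀ i ≤ N, i ≠ 0 → γ i ≠ 0)
    (hpw : p ≤ span K (w '' Set.Iic N)) (hpA : ∀ v ∈ p, A v ∈ p) (hpB : ∀ v ∈ p, B v ∈ p) :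
    p = ⊥ ∨ p = span K (w '' Set.Iic N) := by
  have neighbours : ∀ i ≤ N, w i ∈ p →
      γ i • (if i = 0 then 0 else w (i - 1)) ∈ p ∧ β i • w (i + 1) ∈ p := by
    intro i hi hwi
    have hsum : γ i • (if i = 0 then 0 else w (i - 1)) + β i • w (i + 1) ∈ p := by
      have := p.sub_mem (hpA _ hwi) (p.smul_mem (α i) hwi)
      rwa [hA i hi, add_sub_right_comm, add_sub_cancel_right] at this
    have hprev : B (γ i • (if i = 0 then 0 else w (i - 1))) =
        θ (i - 1) • γ i • (if i = 0 then 0 else w (i - 1)) := by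
      split_ifs <;> simp [hB, smul_comm (θ _)]
    have hnext : B (β i • w (i + 1)) = θ (i + 1) • β i • w (i + 1) := by
      rw [map_smul, hB, smul_comm]
    have hne : θ (i - 1) ≠ θ (i + 1) := hθ.ne (by omega)
    exact ⟨mem_of_add_mem_of_eigenvectors hpB hne hprev hnext hsum,
      mem_of_add_mem_of_eigenvectors hpB hne.symm hnext hprev (by rwa [add_comm] at hsum)⟩
  have up : ∀ i < N, w i ∈ p → w (i + 1) ∈ p := fun i hi hwi =>
    (p.smul_mem_iff (hβ i hi)).1 (neighbours i hi.le hwi).2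
  have down : ∀ i ≤ N, i ≠ 0 → w i ∈ p → w (i - 1) ∈ p := fun i hi hi0 hwi => by
    simpa [hi0, smul_mem_iff _ (hγ i hi hi0)] using (neighbours i hi hwi).1
  refine or_iff_not_imp_left.2 fun hp0 => le_antisymm hpw ?_
  -- the `B`-eigencomponents of a nonzero vector of `p` lie in `p`
  obtain ⟨j, hj, hwj⟩ : ∃ j ≤ N, w j ∈ p := by
    classical
    obtain ⟨u, hu, hu0⟩ := (Submodule.ne_bot_iff p).1 hp0
    obtain ⟨t, ht, c, rfl⟩ := (mem_span_image_iff_exists_fun K).1 (hpw hu)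
    obtain ⟨i, -, hi⟩ := Finset.exists_ne_zero_of_sum_ne_zero hu0
    have hci : c i ≠ 0 := fun h => hi (by simp [h])
    refine ⟨i, ht i.2, (p.smul_mem_iff hci).1 ?_⟩
    refine mem_of_sum_mem_of_eigenvectors hpB (θ := fun i : t => θ i)
      (fun i => by rw [map_smul, hB, smul_comm]) (hθ.comp Subtype.val_injective).injOn hu i
      (Finset.mem_univ _)
  rw [span_le]
  rintro _ ⟨i, hi, rfl⟩
  rcases le_total j i with hji | hij
  · induction i, hji using Nat.le_induction with
    | base => exact hwj
    | succ i hji ih => exact up i hi (ih (by simp at hi ⊢; omega))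
  · induction hij using Nat.decreasingInduction with
    | self => exact hwj
    | of_succ i hij ih =>
      simpa using down (i + 1) (by omega) (by omega) (ih (by simp at hi ⊢; omega))

end Tridiagonal

open Finset

namespace HalvedCube

variable {D : ℕ}

lemma zmod_two_eq_zero_or_one (a : ZMod 2) : a = 0 ∨ a = 1 := by
  fin_cases a <;> [exact Or.inl rfl; exact Or.inr rfl]

lemma vtx_sub_eq_add (a b : Vtx D) : a - b = a + b :=
  funext fun j => CharTwo.sub_eq_add (a j) (b j)

/- Positions are natural numbers, so that the coordinate pairs `(2t, 2t+1)` need no bound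
proofs; `unitWord D x` and `bit c x` vanish for `x ≥ D`. -/
def unitWord (D x : ℕ) : Vtx D := fun j => if (j : ℕ) = x then 1 else 0

def bit (c : Vtx D) (x : ℕ) : ZMod 2 := if h : x < D then c ⟨x, h⟩ else 0

lemma bit_add (c c' : Vtx D) (x : ℕ) : bit (c + c') x = bit c x + bit c' x := by
  unfold bit; split <;> simp

lemma bit_coe (c : Vtx D) (j : Fin D) : bit c j = c j := dif_pos j.isLt

lemma bit_unitWord (x y : ℕ) : bit (unitWord D x) y = if y = x ∧ y < D then 1 else 0 := by
  unfold bit unitWord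
  split_ifs <;> simp_all <;> omega

lemma bit_add_unitWord_of_ne (c : Vtx D) {x y : ℕ} (h : y ≠ x) :
    bit (c + unitWord D x) y = bit c y := by
  simp [bit_add, bit_unitWord, h]

lemma bit_add_unitWord_self (c : Vtx D) {x : ℕ} (hx : x < D) :
    bit (c + unitWord D x) x = bit c x + 1 := by
  simp [bit_add, bit_unitWord, hx]

lemma vtx_add_self (a : Vtx D) : a + a = 0 :=
  funext fun j => CharTwo.add_self_eq_zero (a j)

lemma vtx_add_cancel_left (a b : Vtx D) : a + (a + b) = b := by
  rw [← add_assoc, vtx_add_self, zero_add]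

lemma hammingNorm_eq_sum_bit (c : Vtx D) :
    hammingNorm c = ∑ x ∈ range D, if bit c x = 1 then 1 else 0 := by
  rw [hammingNorm, card_filter, ← Fin.sum_univ_eq_sum_range (fun x => if bit c x = 1 then 1 else 0)]
  refine sum_congr rfl fun j _ => ?_
  rw [bit_coe]
  rcases zmod_two_eq_zero_or_one (c j) with h | h <;> simp [h]

lemma even_hammingNorm_add_add (a b : Vtx D) :
    Even (hammingNorm (a + b) + (hammingNorm a + hammingNorm b)) := by
  simp only [hammingNorm_eq_sum_bit, ← sum_add_distrib]
  refine even_sum _ fun x _ => ?_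
  rw [bit_add]
  rcases zmod_two_eq_zero_or_one (bit a x) with h1 | h1 <;>
    rcases zmod_two_eq_zero_or_one (bit b x) with h2 | h2 <;> rw [h1, h2] <;> decide

lemma even_hammingNorm_add_iff {a b : Vtx D} (ha : Even (hammingNorm a)) :
    Even (hammingNorm (a + b)) ↔ Even (hammingNorm b) := by
  have := even_hammingNorm_add_add a b
  rw [Nat.even_add, Nat.even_add] at this
  tauto

lemma hammingNorm_unitWord_add_unitWord {x x' : ℕ} (hx : x < D) (hx' : x' < D) (hne : x ≠ x') :
    hammingNorm (unitWord D x + unitWord D x') = 2 := by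
  have : univ.filter (fun j => (unitWord D x + unitWord D x') j ≠ 0) =
      {(⟨x, hx⟩ : Fin D), ⟨x', hx'⟩} := by
    ext j
    simp only [mem_filter, mem_univ, true_and]
    by_cases h1 : (j : ℕ) = x <;> by_cases h2 : (j : ℕ) = x' <;>
      simp [unitWord, Fin.ext_iff, h1, h2, hne, Ne.symm hne]
  rw [hammingNorm, this, card_pair (by simp [Fin.ext_iff, hne])]

lemma exists_eq_unitWord_add_unitWord {d : Vtx D} (hd : hammingNorm d = 2) :
    ∃ a b : ℕ, a < D ∧ b < D ∧ a ≠ b ∧ d = unitWord D a + unitWord D b := by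
  obtain ⟨a, b, hab, hset⟩ := card_eq_two.mp hd
  refine ⟨a, b, a.isLt, b.isLt, fun h => hab (Fin.ext h), funext fun j => ?_⟩
  have hmem : d j ≠ 0 ↔ j = a ∨ j = b := by
    simpa using congrArg (j ∈ ·) hset
  have hba : (a : ℕ) ≠ b := fun h => hab (Fin.ext h)
  by_cases hj : j = a ∨ j = b
  · have hd1 : d j = 1 := (zmod_two_eq_zero_or_one _).resolve_left (hmem.2 hj)
    rcases hj with rfl | rfl <;> simp [unitWord, hd1, hba, Ne.symm hba]
  · have hd0 : d j = 0 := not_not.1 (mt hmem.1 hj)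
    push Not at hj
    simp [unitWord, hd0, Fin.val_ne_of_ne hj.1, Fin.val_ne_of_ne hj.2]

lemma unitWord_add_unitWord_eq_iff {x x' a b : ℕ} (hx : x < D) (hx' : x' < D) (ha : a < D)
    (hb : b < D) (hab : a ≠ b) :
    unitWord D x + unitWord D x' = unitWord D a + unitWord D b ↔
      (x = a ∧ x' = b) ∨ (x = b ∧ x' = a) := by
  refine ⟨fun h => ?_, by rintro (⟨rfl, rfl⟩ | ⟨rfl, rfl⟩) <;> [rfl; exact add_comm _ _]⟩
  have key : ∀ y ∈ ({x, x', a, b} : Finset ℕ),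
      ((if y = x then 1 else 0) + (if y = x' then 1 else 0) : ZMod 2) =
        (if y = a then 1 else 0) + (if y = b then 1 else 0) := by
    intro y hy
    have hyD : y < D := by simp only [mem_insert, mem_singleton] at hy; omega
    simpa [bit_add, bit_unitWord, hyD] using congrArg (bit · y) h
  have h1 := key x (by simp)
  have h2 := key x' (by simp)
  have h3 := key a (by simp)
  have h4 := key b (by simp)
  have h11 : (1 : ZMod 2) + 1 = 0 := rfl
  by_cases xa : a = x <;> by_cases xb : b = x <;> by_cases ya : a = x' <;>
    by_cases yb : b = x' <;> by_cases xy : x' = x <;> simp_all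

lemma card_filter_unitWord_add_unitWord_eq (d : Vtx D) :
    #{p ∈ range D ×ˢ range D | unitWord D p.1 + unitWord D p.2 = d} =
      if d = 0 then D else if hammingNorm d = 2 then 2 else 0 := by
  split_ifs with h0 h2
  · subst h0
    have : {p ∈ range D ×ˢ range D | unitWord D p.1 + unitWord D p.2 = 0} = (range D).diag := by
      ext ⟨x, x'⟩
      simp only [mem_filter, mem_product, mem_range, mem_diag]
      refine ⟨fun ⟨⟨hx, hx'⟩, h⟩ => ⟨hx, by_contra fun hne => ?_⟩, ?_⟩
      · simpa [h] using hammingNorm_unitWord_add_unitWord hx hx' hne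
      · rintro ⟨hx, rfl⟩
        exact ⟨⟨hx, hx⟩, vtx_add_self _⟩
    rw [this, diag_card, card_range]
  · obtain ⟨a, b, ha, hb, hab, rfl⟩ := exists_eq_unitWord_add_unitWord h2
    have : {p ∈ range D ×ˢ range D | unitWord D p.1 + unitWord D p.2 =
        unitWord D a + unitWord D b} = {(a, b), (b, a)} := by
      ext ⟨x, x'⟩
      simp only [mem_filter, mem_product, mem_range, mem_insert, mem_singleton, Prod.mk.injEq]
      constructor
      · rintro ⟨⟨hx, hx'⟩, h⟩
        exact (unitWord_add_unitWord_eq_iff hx hx' ha hb hab).1 h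
      · rintro (⟨rfl, rfl⟩ | ⟨rfl, rfl⟩)
        exacts [⟨⟨ha, hb⟩, rfl⟩, ⟨⟨hb, ha⟩, add_comm _ _⟩]
    rw [this, card_pair (by simp [hab])]
  · refine card_eq_zero.2 (filter_eq_empty_iff.2 fun p hp h => ?_)
    simp only [mem_product, mem_range] at hp
    by_cases hp12 : p.1 = p.2
    · exact h0 (h ▸ hp12 ▸ vtx_add_self _)
    · exact h2 (h ▸ hammingNorm_unitWord_add_unitWord hp.1 hp.2 hp12)

lemma sum_sum_add_unitWord_add_unitWord (f : Vtx D → ℂ) (c : Vtx D) :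
    ∑ x ∈ range D, ∑ x' ∈ range D, f (c + unitWord D x + unitWord D x') =
      D * f c + 2 * ∑ d : Vtx D, (if hammingNorm d = 2 then 1 else 0) * f (c + d) := by
  have hfiber : ∀ d : Vtx D,
      ∑ p ∈ range D ×ˢ range D with unitWord D p.1 + unitWord D p.2 = d,
        f (c + (unitWord D p.1 + unitWord D p.2)) =
      (if d = 0 then D * f c else 0) + 2 * ((if hammingNorm d = 2 then 1 else 0) * f (c + d)) := by
    intro d
    rw [sum_congr rfl fun p hp => by rw [(mem_filter.1 hp).2], sum_const,
      card_filter_unitWord_add_unitWord_eq, nsmul_eq_mul]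
    split_ifs with h0 h2 h2 <;> simp_all
  calc ∑ x ∈ range D, ∑ x' ∈ range D, f (c + unitWord D x + unitWord D x')
      = ∑ p ∈ range D ×ˢ range D, f (c + (unitWord D p.1 + unitWord D p.2)) := by
        simp only [sum_product, add_assoc]
    _ = ∑ d, ∑ p ∈ range D ×ˢ range D with unitWord D p.1 + unitWord D p.2 = d,
          f (c + (unitWord D p.1 + unitWord D p.2)) :=
        (sum_fiberwise_of_maps_to (fun p _ => mem_univ _) _).symm
    _ = _ := by
        rw [sum_congr rfl fun d _ => hfiber d, sum_add_distrib, sum_ite_eq', if_pos (mem_univ _),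
          mul_sum]

/-- Coordinates of `e₀₁ - e₁₀ ∈ ℂ^{H(2,2)}`. -/
def pairSign (a b : ZMod 2) : ℂ :=
  if a = 0 ∧ b = 1 then 1 else if a = 1 ∧ b = 0 then -1 else 0

lemma pairSign_add_one_add_pairSign_add_one (a b : ZMod 2) :
    pairSign (a + 1) b + pairSign a (b + 1) = 0 := by
  rcases zmod_two_eq_zero_or_one a with rfl | rfl <;>
    rcases zmod_two_eq_zero_or_one b with rfl | rfl <;>
    simp [pairSign, (by decide : (1 : ZMod 2) + 1 = 0)]

lemma pairSign_ne_zero {a b : ZMod 2} (h : pairSign a b ≠ 0) :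
    (a = 0 ∧ b = 1) ∨ (a = 1 ∧ b = 0) := by
  unfold pairSign at h
  split_ifs at h <;> tauto

variable (D) in
def pairProd (r : ℕ) (c : Vtx D) : ℂ :=
  ∏ t ∈ range r, pairSign (bit c (2 * t)) (bit c (2 * t + 1))

variable (D) in
def tailWeight (r : ℕ) (c : Vtx D) : ℕ := #{x ∈ Ico (2 * r) D | bit c x = 1}

variable (D) in
/-- The vector `(e₀₁ - e₁₀)^{⊗ r} ⊗ 𝟙[weight = m]` of
`ℂ^{H(D,2)} = (ℂ^{H(2,2)})^{⊗ r} ⊗ ℂ^{H(D-2r,2)}`. -/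
def pairShell (r m : ℕ) (c : Vtx D) : ℂ :=
  pairProd D r c * if tailWeight D r c = m then 1 else 0

lemma tailWeight_le (r : ℕ) (c : Vtx D) : tailWeight D r c ≤ D - 2 * r :=
  (card_filter_le _ _).trans (Nat.card_Ico _ _).le

lemma pairProd_add_unitWord_of_le {r x : ℕ} (c : Vtx D) (hx : 2 * r ≤ x) :
    pairProd D r (c + unitWord D x) = pairProd D r c :=
  prod_congr rfl fun t ht => by
    rw [mem_range] at ht
    rw [bit_add_unitWord_of_ne _ (by omega), bit_add_unitWord_of_ne _ (by omega)]

lemma tailWeight_add_unitWord_of_lt {r x : ℕ} (c : Vtx D) (hx : x < 2 * r) :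
    tailWeight D r (c + unitWord D x) = tailWeight D r c :=
  congrArg card <| filter_congr fun y hy => by
    rw [mem_Ico] at hy
    rw [bit_add_unitWord_of_ne _ (by omega)]

lemma tailWeight_add_unitWord_of_bit_eq_one {r x : ℕ} (c : Vtx D) (hx : x ∈ Ico (2 * r) D)
    (h1 : bit c x = 1) : tailWeight D r (c + unitWord D x) + 1 = tailWeight D r c := by
  have hxD : x < D := (mem_Ico.1 hx).2
  have : {y ∈ Ico (2 * r) D | bit (c + unitWord D x) y = 1} =
      {y ∈ Ico (2 * r) D | bit c y = 1}.erase x := by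
    ext y
    by_cases hy : y = x
    · subst hy; simp [bit_add_unitWord_self _ hxD, h1]
    · simp [bit_add_unitWord_of_ne _ hy, hy]
  rw [tailWeight, this, card_erase_add_one (mem_filter.2 ⟨hx, h1⟩), tailWeight]

lemma tailWeight_add_unitWord_of_bit_eq_zero {r x : ℕ} (c : Vtx D) (hx : x ∈ Ico (2 * r) D)
    (h0 : bit c x = 0) : tailWeight D r (c + unitWord D x) = tailWeight D r c + 1 := by
  have hxD : x < D := (mem_Ico.1 hx).2
  have : {y ∈ Ico (2 * r) D | bit (c + unitWord D x) y = 1} =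
      insert x {y ∈ Ico (2 * r) D | bit c y = 1} := by
    ext y
    by_cases hy : y = x
    · subst hy; simp [bit_add_unitWord_self _ hxD, h0, hx]
    · simp [bit_add_unitWord_of_ne _ hy, hy]
  rw [tailWeight, this, card_insert_of_notMem (by simp [h0]), tailWeight]

lemma sum_range_two_mul {M : Type*} [AddCommMonoid M] (R : ℕ) (g : ℕ → M) :
    ∑ x ∈ range (2 * R), g x = ∑ t ∈ range R, (g (2 * t) + g (2 * t + 1)) := by
  induction R with
  | zero => simp
  | succ R ih => rw [mul_add_one, sum_range_succ, sum_range_succ, sum_range_succ, ih, add_assoc]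

lemma pairProd_add_unitWord_add_pairProd_add_unitWord {r t : ℕ} (c : Vtx D) (ht : t < r)
    (htD : 2 * t + 1 < D) :
    pairProd D r (c + unitWord D (2 * t)) + pairProd D r (c + unitWord D (2 * t + 1)) = 0 := by
  have htr : t ∈ range r := mem_range.2 ht
  have factor : ∀ x ∈ ({2 * t, 2 * t + 1} : Finset ℕ), pairProd D r (c + unitWord D x) =
      pairSign (bit (c + unitWord D x) (2 * t)) (bit (c + unitWord D x) (2 * t + 1)) *
        ∏ s ∈ (range r).erase t, pairSign (bit c (2 * s)) (bit c (2 * s + 1)) := by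
    intro x hx
    simp only [mem_insert, mem_singleton] at hx
    rw [pairProd, ← mul_prod_erase _ _ htr]
    refine congrArg _ (prod_congr rfl fun s hs => ?_)
    have hst : s ≠ t := (mem_erase.1 hs).1
    rw [bit_add_unitWord_of_ne _ (by omega), bit_add_unitWord_of_ne _ (by omega)]
  rw [factor _ (by simp), factor _ (by simp), ← add_mul, bit_add_unitWord_self _ (by omega),
    bit_add_unitWord_of_ne _ (by omega), bit_add_unitWord_of_ne _ (by omega),
    bit_add_unitWord_self _ htD, pairSign_add_one_add_pairSign_add_one, zero_mul]

lemma sum_range_two_mul_pairShell_add_unitWord {r : ℕ} (m : ℕ) (c : Vtx D) (hrD : 2 * r ≤ D) :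
    ∑ x ∈ range (2 * r), pairShell D r m (c + unitWord D x) = 0 := by
  rw [sum_range_two_mul]
  refine sum_eq_zero fun t ht => ?_
  rw [mem_range] at ht
  rw [pairShell, pairShell, tailWeight_add_unitWord_of_lt c (by omega),
    tailWeight_add_unitWord_of_lt c (by omega), ← add_mul,
    pairProd_add_unitWord_add_pairProd_add_unitWord c ht (by omega), zero_mul]

lemma sum_Ico_pairShell_add_unitWord {r : ℕ} (m : ℕ) (c : Vtx D) (hrD : 2 * r ≤ D) :
    ∑ x ∈ Ico (2 * r) D, pairShell D r m (c + unitWord D x) =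
      (if tailWeight D r c = m + 1 then ((m : ℂ) + 1) * pairProd D r c else 0) +
      (if tailWeight D r c + 1 = m then
        ((D : ℂ) - 2 * r - tailWeight D r c) * pairProd D r c else 0) := by
  rw [← sum_filter_add_sum_filter_not _ (fun x => bit c x = 1)]
  congr 1
  · have hterm : ∀ x ∈ {x ∈ Ico (2 * r) D | bit c x = 1}, pairShell D r m (c + unitWord D x) =
        if tailWeight D r c = m + 1 then pairProd D r c else 0 := by
      intro x hx
      rw [mem_filter] at hx
      have h := tailWeight_add_unitWord_of_bit_eq_one c hx.1 hx.2
      rw [pairShell, pairProd_add_unitWord_of_le c (mem_Ico.1 hx.1).1]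
      simp only [show tailWeight D r (c + unitWord D x) = m ↔ tailWeight D r c = m + 1 by omega]
      split_ifs <;> simp
    rw [sum_congr rfl hterm, sum_const]
    change tailWeight D r c • _ = _
    split_ifs with h <;> simp [h]
  · have hcard : #{x ∈ Ico (2 * r) D | ¬bit c x = 1} = D - 2 * r - tailWeight D r c := by
      have := card_filter_add_card_filter_not (s := Ico (2 * r) D) (fun x => bit c x = 1)
      rw [Nat.card_Ico] at this
      change tailWeight D r c + _ = _ at this
      omega
    rw [sum_congr rfl fun x hx => by
      rw [pairShell, pairProd_add_unitWord_of_le c (mem_Ico.1 (mem_filter.1 hx).1).1,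
        tailWeight_add_unitWord_of_bit_eq_zero c (mem_filter.1 hx).1
          ((zmod_two_eq_zero_or_one _).resolve_right (mem_filter.1 hx).2)], sum_const, hcard]
    split_ifs with h
    · rw [nsmul_eq_mul, Nat.cast_sub (tailWeight_le r c), Nat.cast_sub hrD]
      push_cast
      ring
    · simp

lemma sum_range_pairShell_add_unitWord {r : ℕ} (m : ℕ) (c : Vtx D) (hrD : 2 * r ≤ D) :
    ∑ x ∈ range D, pairShell D r m (c + unitWord D x) =
      ((D : ℂ) - 2 * r - m + 1) * (if m = 0 then 0 else pairShell D r (m - 1) c) +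
        ((m : ℂ) + 1) * pairShell D r (m + 1) c := by
  rw [range_eq_Ico, ← sum_Ico_consecutive _ (Nat.zero_le _) hrD, ← range_eq_Ico,
    sum_range_two_mul_pairShell_add_unitWord m c hrD, zero_add,
    sum_Ico_pairShell_add_unitWord m c hrD]
  simp only [pairShell]
  obtain h | h | h : tailWeight D r c + 1 = m ∨ tailWeight D r c = m + 1 ∨
      (tailWeight D r c + 1 ≠ m ∧ tailWeight D r c ≠ m + 1) := by omega
  · subst h
    simp
    ring
  · simp [h, show m + 1 + 1 ≠ m by omega, show m + 1 ≠ m - 1 by omega]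
  · have : m = 0 ∨ tailWeight D r c ≠ m - 1 := by omega
    rcases this with h' | h' <;> simp [h.1, h.2, h']

lemma sum_hammingNorm_eq_two_pairShell {r : ℕ} (i : ℕ) (c : Vtx D) (hrD : 2 * r ≤ D) :
    ∑ d : Vtx D, (if hammingNorm d = 2 then 1 else 0) * pairShell D r (2 * i + 1) (c + d) =
      ((D : ℂ) - 2 * r - 2 * i) * ((D : ℂ) - 2 * r - 2 * i + 1) / 2 *
          (if i = 0 then 0 else pairShell D r (2 * i - 1) c) +
        (((D : ℂ) - 2 * r - 2 * i) * (2 * i + 1) + (2 * i + 2) * ((D : ℂ) - 2 * r - 2 * i - 1) -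
          D) / 2 * pairShell D r (2 * i + 1) c +
        ((i : ℂ) + 1) * (2 * i + 3) * pairShell D r (2 * i + 3) c := by
  have hsq := sum_sum_add_unitWord_add_unitWord (pairShell D r (2 * i + 1)) c
  simp only [sum_range_pairShell_add_unitWord _ _ hrD, add_tsub_cancel_right,
    Nat.add_one_ne_zero, if_false, sum_add_distrib, ← mul_sum] at hsq
  simp only [show 2 * i + 1 + 1 + 1 = 2 * i + 3 by omega, mul_eq_zero, OfNat.ofNat_ne_zero,
    false_or] at hsq
  push_cast at hsq ⊢
  linear_combination hsq / (-2)

lemma hammingNorm_of_pairShell_ne_zero {r m : ℕ} {c : Vtx D} (hrD : 2 * r ≤ D)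
    (h : pairShell D r m c ≠ 0) : hammingNorm c = r + m := by
  have hP : pairProd D r c ≠ 0 := left_ne_zero_of_mul h
  have htw : tailWeight D r c = m := by
    by_contra h0
    simp [pairShell, h0] at h
  have hpairs : ∑ x ∈ range (2 * r), (if bit c x = 1 then 1 else 0) = r := by
    rw [sum_range_two_mul]
    trans ∑ _t ∈ range r, 1
    · refine sum_congr rfl fun t ht => ?_
      rcases pairSign_ne_zero (prod_ne_zero_iff.1 hP t ht) with ⟨h1, h2⟩ | ⟨h1, h2⟩ <;>
        simp [h1, h2]
    · simp
  rw [hammingNorm_eq_sum_bit, range_eq_Ico, ← sum_Ico_consecutive _ (Nat.zero_le _) hrD,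
    ← range_eq_Ico, hpairs, ← htw, tailWeight, card_filter]

variable (D) in
def shellWord (r m : ℕ) : Vtx D := fun j =>
  if ((j : ℕ) < 2 * r ∧ (j : ℕ) % 2 = 1) ∨ (2 * r ≤ j ∧ (j : ℕ) < 2 * r + m) then 1 else 0

lemma bit_shellWord {r m x : ℕ} (hx : x < D) :
    bit (shellWord D r m) x =
      if (x < 2 * r ∧ x % 2 = 1) ∨ (2 * r ≤ x ∧ x < 2 * r + m) then 1 else 0 :=
  dif_pos hx

lemma pairShell_shellWord {r m : ℕ} (m' : ℕ) (h : 2 * r + m ≤ D) :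
    pairShell D r m' (shellWord D r m) = if m = m' then 1 else 0 := by
  have hP : pairProd D r (shellWord D r m) = 1 := prod_eq_one fun t ht => by
    rw [mem_range] at ht
    rw [bit_shellWord (by omega), bit_shellWord (by omega), if_neg (by omega), if_pos (by omega)]
    simp [pairSign]
  have htw : tailWeight D r (shellWord D r m) = m := by
    have : {x ∈ Ico (2 * r) D | bit (shellWord D r m) x = 1} = Ico (2 * r) (2 * r + m) := by
      ext y
      simp only [mem_filter, mem_Ico]
      by_cases hy : y < D
      · rw [bit_shellWord hy]
        split_ifs <;> simp <;> omega
      · simp [hy]; omega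
    rw [tailWeight, this, Nat.card_Ico, Nat.add_sub_cancel_left]
  rw [pairShell, hP, htw, one_mul]

lemma adjHalf_mulVec_apply (f : Vtx D → ℂ) (y : HVtx D) :
    (adjHalf D *ᵥ fun z => f z.val) y =
      ∑ d : Vtx D, (if hammingNorm d = 2 then 1 else 0) * f (y.val + d) := by
  set g : Vtx D → ℂ := fun z => (if hammingNorm (y.val - z) = 2 then 1 else 0) * f z
  have hg : ∀ z, g z ≠ 0 → Even (hammingNorm z) := fun z hz => by
    have h2 : hammingNorm (y.val + z) = 2 := by
      by_contra h
      simp [g, vtx_sub_eq_add, h] at hz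
    exact (even_hammingNorm_add_iff y.2).1 (by rw [h2]; exact even_two)
  calc (adjHalf D *ᵥ fun z => f z.val) y = ∑ z : HVtx D, g z := rfl
    _ = ∑ z with Even (hammingNorm z), g z := (sum_subtype _ (by simp) g).symm
    _ = ∑ z, g z := sum_filter_of_ne fun z _ => hg z
    _ = ∑ d, g (y.val + d) := (Fintype.sum_equiv (Equiv.addLeft y.val) _ g fun _ => rfl).symm
    _ = _ := by simp only [g, vtx_sub_eq_add, vtx_add_cancel_left]

variable (D) in
/-- The vectors `w i` of the theorem, for `k - 1` pairs; note `x₀ + y = x₀ - y` in `𝔽₂^D`. -/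
def halvedVec (x₀ : HVtx D) (k i : ℕ) : HVtx D → ℂ :=
  fun y => pairShell D (k - 1) (2 * i + 1) (x₀.val + y.val)

lemma adjHalf_mulVec_halvedVec (x₀ : HVtx D) {k : ℕ} (hk : 1 ≤ k) (hkD : 2 * k ≤ D + 2) (i : ℕ) :
    (adjHalf D).mulVec (halvedVec D x₀ k i) =
      ((((D : ℂ) - 2 * i - 2 * k + 2) * ((D : ℂ) - 2 * i - 2 * k + 3)) / 2) •
        (if i = 0 then 0 else halvedVec D x₀ k (i - 1)) +
      ((2 * (i : ℂ) + 1) * ((D : ℂ) - 2 * i - 2 * k + 1) - k + 1) • halvedVec D x₀ k i +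
      (((i : ℂ) + 1) * (2 * i + 3)) • halvedVec D x₀ k (i + 1) := by
  funext y
  rw [show halvedVec D x₀ k i = fun z : HVtx D => pairShell D (k - 1) (2 * i + 1) (x₀.val + z.val)
    from rfl, adjHalf_mulVec_apply (fun z => pairShell D (k - 1) (2 * i + 1) (x₀.val + z))]
  simp only [← add_assoc]
  rw [sum_hammingNorm_eq_two_pairShell i _ (by omega)]
  have hk' : ((k - 1 : ℕ) : ℂ) = k - 1 := by rw [Nat.cast_sub hk, Nat.cast_one]
  simp only [halvedVec, hk', Pi.add_apply, Pi.smul_apply, smul_eq_mul, ite_apply, Pi.zero_apply,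
    show 2 * (i + 1) + 1 = 2 * i + 3 by omega]
  split_ifs
  · ring
  · rw [show 2 * (i - 1) + 1 = 2 * i - 1 by omega]
    ring

lemma lowerCoeff_ne_zero {i k : ℕ} (h : 2 * i + 2 * k ≤ D + 1) :
    ((D : ℂ) - 2 * i - 2 * k + 2) * ((D : ℂ) - 2 * i - 2 * k + 3) / 2 ≠ 0 := by
  refine div_ne_zero (mul_ne_zero (fun h2 => ?_) (fun h3 => ?_)) two_ne_zero
  · have : ((D + 2 : ℕ) : ℂ) = (2 * i + 2 * k : ℕ) := by push_cast; linear_combination h2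
    exact absurd (Nat.cast_injective this) (by omega)
  · have : ((D + 3 : ℕ) : ℂ) = (2 * i + 2 * k : ℕ) := by push_cast; linear_combination h3
    exact absurd (Nat.cast_injective this) (by omega)

lemma dualHalf_mulVec_halvedVec (x₀ : HVtx D) {k : ℕ} (hk : 1 ≤ k) (hkD : 2 * k ≤ D + 2) (i : ℕ) :
    (dualHalf D x₀).mulVec (halvedVec D x₀ k i) =
      ((D : ℂ) - 2 * (2 * i + k)) • halvedVec D x₀ k i := by
  funext y
  rw [dualHalf, mulVec_diagonal, Pi.smul_apply, smul_eq_mul]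
  by_cases h : halvedVec D x₀ k i y = 0
  · simp [h]
  · rw [vtx_sub_eq_add, hammingNorm_of_pairShell_ne_zero (by omega) h]
    push_cast [Nat.cast_sub hk]
    ring

lemma halvedVec_eq_zero (x₀ : HVtx D) {k i : ℕ} (h : D + 1 < 2 * i + 2 * k) :
    halvedVec D x₀ k i = 0 := by
  funext y
  have := tailWeight_le (k - 1) (x₀.val + y.val)
  simp [halvedVec, pairShell, show tailWeight D (k - 1) (x₀.val + y.val) ≠ 2 * i + 1 by omega]

lemma exists_halvedVec_eq_ite (x₀ : HVtx D) {k i : ℕ} (hk : Even k) (hk1 : 1 ≤ k)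
    (hi : 2 * i + 2 * k ≤ D + 1) :
    ∃ y : HVtx D, ∀ j, halvedVec D x₀ k j y = if i = j then 1 else 0 := by
  set c := shellWord D (k - 1) (2 * i + 1)
  have hc : ∀ j, pairShell D (k - 1) (2 * j + 1) c = if i = j then 1 else 0 := fun j => by
    rw [pairShell_shellWord _ (by omega)]
    simp
  have hwt : hammingNorm c = k - 1 + (2 * i + 1) :=
    hammingNorm_of_pairShell_ne_zero (by omega) (by simp [hc])
  have hy : Even (hammingNorm (x₀.val + c)) := by
    rw [even_hammingNorm_add_iff x₀.2, hwt, show k - 1 + (2 * i + 1) = k + 2 * i by omega]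
    exact hk.add (even_two_mul i)
  exact ⟨⟨x₀.val + c, hy⟩, fun j => by rw [halvedVec, vtx_add_cancel_left, hc]⟩

lemma linearIndependent_halvedVec (x₀ : HVtx D) {k N : ℕ} (hk : Even k) (hk1 : 1 ≤ k)
    (hN : 2 * N + 2 * k ≤ D + 1) :
    LinearIndependent ℂ (fun i : Fin (N + 1) => halvedVec D x₀ k i) := by
  choose y hy using fun i : Fin (N + 1) => exists_halvedVec_eq_ite x₀ hk hk1 (i := i) (by omega)
  rw [Fintype.linearIndependent_iff]
  intro g hg i
  simpa [hy, Fin.val_inj] using congrFun hg (y i)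

end HalvedCube

open HalvedCube in
theorem stmt1_general (D : ℕ) (x₀ : HVtx D) (k : ℕ) (hk : Even k)
    (hk2 : 2 ≤ k) (hkD : k ≤ (D + 1) / 2) :
    ∃ W : Submodule ℂ (HVtx D → ℂ),
      Module.finrank ℂ W = (D + 1) / 2 - k + 1 ∧
      MatInvariant (adjHalf D) W ∧
      MatInvariant (dualHalf D x₀) W ∧
      (∀ U : Submodule ℂ (HVtx D → ℂ), U ≤ W →
        MatInvariant (adjHalf D) U → MatInvariant (dualHalf D x₀) U → U = ⊥ ∨ U = W) ∧
      ∃ w : ℕ → (HVtx D → ℂ),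
        (∀ i ≤ (D + 1) / 2 - k, w i ∈ W) ∧
        LinearIndependent ℂ (fun i : Fin ((D + 1) / 2 - k + 1) => w i) ∧
        Submodule.span ℂ (w '' Set.Iic ((D + 1) / 2 - k)) = W ∧
        w ((D + 1) / 2 - k + 1) = 0 ∧
        (∀ i ≤ (D + 1) / 2 - k,
          (adjHalf D).mulVec (w i) =
            ((((D : ℂ) - 2 * i - 2 * k + 2) * ((D : ℂ) - 2 * i - 2 * k + 3)) / 2) •
              (if i = 0 then 0 else w (i - 1)) +
            ((2 * (i : ℂ) + 1) * ((D : ℂ) - 2 * i - 2 * k + 1) - k + 1) • w i +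
            (((i : ℂ) + 1) * (2 * i + 3)) • w (i + 1)) ∧
        (∀ i ≤ (D + 1) / 2 - k,
          (dualHalf D x₀).mulVec (w i) = ((D : ℂ) - 2 * (2 * i + k)) • w i) := by
  set N := (D + 1) / 2 - k
  have hA := adjHalf_mulVec_halvedVec x₀ (k := k) (by omega) (by omega)
  have hB := dualHalf_mulVec_halvedVec x₀ (k := k) (by omega) (by omega)
  have hwN : halvedVec D x₀ k (N + 1) = 0 := halvedVec_eq_zero x₀ (by omega)
  have hli := linearIndependent_halvedVec x₀ (N := N) hk (by omega) (by omega)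
  have hθ : Function.Injective fun i : ℕ => (D : ℂ) - 2 * (2 * i + k) := fun i j h => by
    simpa using h
  have hβ : ∀ i < N, ((i : ℂ) + 1) * (2 * i + 3) ≠ 0 := fun i _ => by
    exact_mod_cast (by positivity : (i + 1) * (2 * i + 3) ≠ 0)
  refine ⟨span ℂ (halvedVec D x₀ k '' Set.Iic N), ?_,
    apply_mem_span_image_Iic_of_tridiagonal (A := (adjHalf D).mulVecLin) (fun i _ => hA i) hwN,
    apply_mem_span_image_of_eigenvectors (B := (dualHalf D x₀).mulVecLin) (fun i _ => hB i),
    fun U hUW hUA hUB => eq_bot_or_eq_span_of_tridiagonal (A := (adjHalf D).mulVecLin)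
      (B := (dualHalf D x₀).mulVecLin) hθ hB (fun i _ => hA i) hβ
      (fun i _ _ => lowerCoeff_ne_zero (by omega)) hUW hUA hUB,
    halvedVec D x₀ k, fun i hi => subset_span ⟨i, hi, rfl⟩, hli, rfl, hwN, fun i _ => hA i,
    fun i _ => hB i⟩
  rw [← Set.Iio_add_one_eq_Iic, ← Fin.range_val, ← Set.range_comp]
  exact (finrank_span_eq_card hli).trans (Fintype.card_fin _)

theorem stmt1 (D : ℕ) (hD : 3 ≤ D) (x₀ : HVtx D) (k : ℕ) (hk : Even k)
    (hk2 : 2 ≤ k) (hkD : k ≤ (D + 1) / 2) :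
    ∃ W : Submodule ℂ (HVtx D → ℂ),
      Module.finrank ℂ W = (D + 1) / 2 - k + 1 ∧
      MatInvariant (adjHalf D) W ∧
      MatInvariant (dualHalf D x₀) W ∧
      (∀ U : Submodule ℂ (HVtx D → ℂ), U ≤ W →
        MatInvariant (adjHalf D) U → MatInvariant (dualHalf D x₀) U → U = ⊥ ∨ U = W) ∧
      ∃ w : ℕ → (HVtx D → ℂ),
        (∀ i ≤ (D + 1) / 2 - k, w i ∈ W) ∧
        LinearIndependent ℂ (fun i : Fin ((D + 1) / 2 - k + 1) => w i) ∧
        Submodule.span ℂ (w '' Set.Iic ((D + 1) / 2 - k)) = W ∧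
        w ((D + 1) / 2 - k + 1) = 0 ∧
        (∀ i ≤ (D + 1) / 2 - k,
          (adjHalf D).mulVec (w i) =
            ((((D : ℂ) - 2 * i - 2 * k + 2) * ((D : ℂ) - 2 * i - 2 * k + 3)) / 2) •
              (if i = 0 then 0 else w (i - 1)) +
            ((2 * (i : ℂ) + 1) * ((D : ℂ) - 2 * i - 2 * k + 1) - k + 1) • w i +
            (((i : ℂ) + 1) * (2 * i + 3)) • w (i + 1)) ∧
        (∀ i ≤ (D + 1) / 2 - k,
          (dualHalf D x₀).mulVec (w i) = ((D : ℂ) - 2 * (2 * i + k)) • w i) :=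
  stmt1_general D x₀ k hk hk2 hkD
end

section
/- For all integers i and n with 0 ≤ i ≤ D and 0 ≤ n ≤ D, the polynomial v_i satisfies v_i(D − 2n) = C(D,i) · Σ_{j=0}^{i} (−2)^j · C(i,j)·C(n,j) / C(D,j), where C(a,b) denotes the binomial coefficient. Equivalently, v_i(t) = C(D,i)·K_i((D−t)/2; 2, D) where K_i is the Krawtchouk polynomial K_i(t;q,n) = Σ_{j=0}^i (−q)^j C(i,j)C(t,j)/C(n,j). -/
/-!
Write `t = D - 2n`. The coefficients `k_i` of `P = (1 - X)^n (1 + X)^(D - n)` satisfy the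
three-term recurrence of the `v_i`, because `P` solves `(1 - X²) P' = (t - D X) P`; comparing
coefficients of `X^i` gives `t k_i = (D - i + 1) k_(i-1) + (i + 1) k_(i+1)`, and `k_0 = 1`,
`k_1 = t`. Hence `v_i(t) = k_i`. Expanding `1 - X = (1 + X) - 2X` binomially gives
`k_i = ∑_j (-2)^j C(n,j) C(D-j,i-j)`, and `C(D,i) C(i,j) = C(D,j) C(D-j,i-j)`.
-/

open Polynomial Finset

namespace Krawtchouk

section CommRing

variable {R : Type*} [CommRing R]

theorem mul_derivative_pow (p : R[X]) (m : ℕ) :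
    p * derivative (p ^ m) = C (m : R) * p ^ m * derivative p := by
  cases m with
  | zero => simp
  | succ m => rw [derivative_pow_succ, pow_succ]; push_cast; ring

variable (R) in
noncomputable def genPoly (D n : ℕ) : R[X] := (1 - X) ^ n * (1 + X) ^ (D - n)

variable {D n : ℕ}

theorem one_sub_X_sq_mul_derivative_genPoly (hn : n ≤ D) :
    (1 - X ^ 2) * derivative (genPoly R D n) =
      (C ((D : R) - 2 * n) - C (D : R) * X) * genPoly R D n := by
  have h₁ := mul_derivative_pow (1 - X : R[X]) n
  have h₂ := mul_derivative_pow (1 + X : R[X]) (D - n)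
  simp only [derivative_add, derivative_one, derivative_X, Nat.cast_sub hn,
    map_sub, map_natCast] at h₁ h₂
  simp only [genPoly, derivative_mul, map_sub, map_mul, map_natCast, map_ofNat]
  linear_combination ((1 + X) * (1 + X) ^ (D - n)) * h₁ + ((1 - X) * (1 - X) ^ n) * h₂

theorem coeff_genPoly_recurrence (hn : n ≤ D) (m : ℕ) :
    ((D : R) - 2 * n) * (genPoly R D n).coeff (m + 1) =
      ((D : R) - m) * (genPoly R D n).coeff m + (m + 2) * (genPoly R D n).coeff (m + 2) := by
  have h := congrArg (coeff · (m + 1)) (one_sub_X_sq_mul_derivative_genPoly (R := R) hn)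
  simp only [sub_mul, one_mul, coeff_sub, coeff_X_pow_mul', coeff_derivative, coeff_C_mul,
    mul_assoc, coeff_X_mul] at h
  cases m with
  | zero =>
    simp only [zero_add, Nat.reduceAdd, Nat.cast_one, Nat.not_ofNat_le_one, ↓reduceIte, sub_zero,
      Nat.cast_zero] at h ⊢
    linear_combination -h
  | succ m =>
    simp only [show 2 ≤ m + 1 + 1 by omega, if_true, show m + 1 + 1 - 2 = m by omega] at h
    push_cast at h ⊢
    linear_combination -h

theorem coeff_zero_genPoly : (genPoly R D n).coeff 0 = 1 := by
  simp [coeff_zero_eq_eval_zero, genPoly]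

theorem coeff_one_genPoly (hn : n ≤ D) : (genPoly R D n).coeff 1 = (D : R) - 2 * n := by
  have h := congrArg (eval 0) (one_sub_X_sq_mul_derivative_genPoly (R := R) hn)
  simp only [eval_mul, eval_sub, eval_one, eval_pow, eval_X, eval_C, ← coeff_zero_eq_eval_zero,
    coeff_derivative, coeff_zero_genPoly] at h
  linear_combination h

theorem genPoly_eq_sum (hn : n ≤ D) :
    genPoly R D n =
      ∑ j ∈ range (n + 1), C ((-2) ^ j * (n.choose j : R)) * X ^ j * (1 + X) ^ (D - j) := by
  rw [genPoly, show (1 - X : R[X]) = C (-2) * X + (1 + X) by rw [map_neg, map_ofNat]; ring,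
    add_pow, sum_mul]
  refine sum_congr rfl fun j hj ↦ ?_
  have hjn := mem_range_succ_iff.mp hj
  rw [show D - j = (n - j) + (D - n) by omega, pow_add]
  simp only [mul_pow, C_mul, C_pow, map_natCast]
  ring

theorem coeff_genPoly (hn : n ≤ D) (i : ℕ) :
    (genPoly R D n).coeff i =
      ∑ j ∈ range (i + 1), (-2) ^ j * (n.choose j : R) * ((D - j).choose (i - j) : R) := by
  set f : ℕ → R := fun j =>
    (-2) ^ j * n.choose j * if j ≤ i then ((D - j).choose (i - j) : R) else 0
  have extend : ∀ k ≤ n + i, (∀ j, k < j → f j = 0) →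
      ∑ j ∈ range (k + 1), f j = ∑ j ∈ range (n + i + 1), f j := fun k hk hf ↦
    sum_subset (range_subset_range.mpr (by omega)) fun j _ hj ↦ hf j (by simpa using hj)
  calc (genPoly R D n).coeff i = ∑ j ∈ range (n + 1), f j := by
        rw [genPoly_eq_sum hn, finsetSum_coeff]
        simp only [mul_assoc, coeff_C_mul, coeff_X_pow_mul', coeff_one_add_X_pow, f]
    _ = ∑ j ∈ range (i + 1), f j := by
        rw [extend n (by omega) fun j hj ↦ by simp [f, Nat.choose_eq_zero_of_lt hj],
          extend i (by omega) fun j hj ↦ by simp [f, hj.not_ge]]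
    _ = _ := sum_congr rfl fun j hj ↦ by simp [f, mem_range_succ_iff.mp hj]

end CommRing

section Field

variable {K : Type*} [Field K] [CharZero K]

theorem choose_mul_choose_div_choose {D i j : ℕ} (hji : j ≤ i) (hiD : i ≤ D) :
    (D.choose i : K) * i.choose j / D.choose j = (D - j).choose (i - j) := by
  rw [div_eq_iff (Nat.cast_ne_zero.mpr (Nat.choose_pos (hji.trans hiD)).ne')]
  exact_mod_cast (Nat.choose_mul hji).trans (mul_comm _ _)

theorem eval_eq_of_recurrence (D : ℕ) (v : ℕ → K[X]) (hv0 : v 0 = 1) (hv1 : v 1 = X)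
    (hrec : ∀ i : ℕ, 1 ≤ i → i ≤ D - 1 →
      X * v i = C ((D : K) - i + 1) * v (i - 1) + C ((i : K) + 1) * v (i + 1))
    (t : K) (k : ℕ → K) (hk0 : k 0 = 1) (hk1 : k 1 = t)
    (hk : ∀ m, t * k (m + 1) = ((D : K) - m) * k m + (m + 2) * k (m + 2)) :
    ∀ i ≤ D, (v i).eval t = k i := by
  intro i
  induction i using Nat.twoStepInduction with
  | zero => simp [hv0, hk0]
  | one => simp [hv1, hk1]
  | more m ih₀ ih₁ =>
    intro hm
    have h := congrArg (eval t) (hrec (m + 1) (by omega) (by omega))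
    simp only [eval_add, eval_mul, eval_X, eval_C, Nat.add_sub_cancel, ih₀ (by omega),
      ih₁ (by omega)] at h
    push_cast at h
    have hm2 : (m : K) + 2 ≠ 0 := by exact_mod_cast (m + 1).succ_ne_zero
    refine mul_left_cancel₀ hm2 ?_
    linear_combination hk m - h

end Field

end Krawtchouk

theorem stmt9_general (D : ℕ) (v : ℕ → Polynomial ℂ)
    (hv0 : v 0 = 1) (hv1 : v 1 = Polynomial.X)
    (hrec : ∀ i : ℕ, 1 ≤ i → i ≤ D - 1 →
      Polynomial.X * v i =
        Polynomial.C ((D : ℂ) - i + 1) * v (i - 1) + Polynomial.C ((i : ℂ) + 1) * v (i + 1)) :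
    ∀ i ≤ D, ∀ n ≤ D,
      (v i).eval ((D : ℂ) - 2 * n) =
        (D.choose i : ℂ) *
          ∑ j ∈ Finset.range (i + 1),
            (-2 : ℂ) ^ j * (i.choose j : ℂ) * (n.choose j : ℂ) / (D.choose j : ℂ) := by
  intro i hi n hn
  rw [Krawtchouk.eval_eq_of_recurrence D v hv0 hv1 hrec _ _ Krawtchouk.coeff_zero_genPoly
    (Krawtchouk.coeff_one_genPoly hn) (Krawtchouk.coeff_genPoly_recurrence hn) i hi,
    Krawtchouk.coeff_genPoly hn, mul_sum]
  refine sum_congr rfl fun j hj ↦ ?_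
  rw [← Krawtchouk.choose_mul_choose_div_choose (mem_range_succ_iff.mp hj) hi]
  ring

theorem stmt9 (D : ℕ) (hD : 3 ≤ D) (v : ℕ → Polynomial ℂ)
    (hv0 : v 0 = 1) (hv1 : v 1 = Polynomial.X)
    (hrec : ∀ i : ℕ, 1 ≤ i → i ≤ D - 1 →
      Polynomial.X * v i =
        Polynomial.C ((D : ℂ) - i + 1) * v (i - 1) + Polynomial.C ((i : ℂ) + 1) * v (i + 1)) :
    ∀ i ≤ D, ∀ n ≤ D,
      (v i).eval ((D : ℂ) - 2 * n) =
        (D.choose i : ℂ) *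
          ∑ j ∈ Finset.range (i + 1),
            (-2 : ℂ) ^ j * (i.choose j : ℂ) * (n.choose j : ℂ) / (D.choose j : ℂ) :=
  stmt9_general D v hv0 hv1 hrec
end

section
/- For every integer n with 0 ≤ n ≤ D, the polynomial v_{D−1} satisfies v_{D−1}(D − 2n) = (−1)^n·(D − 2n). Equivalently, Σ_{j=0}^{D−1} (−2)^j·(D−j)·C(n,j) = (−1)^n·(D−2n), where C(n,j) denotes the binomial coefficient. -/
open Polynomial Finset

private lemma stmt10_pow_pred (p : ℂ[X]) (k : ℕ) :
    C (k : ℂ) * p ^ (k - 1) * p = C (k : ℂ) * p ^ k := by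
  cases k with
  | zero => simp
  | succ k => rw [Nat.succ_sub_one, mul_assoc, ← pow_succ]

private lemma stmt10_key (n m : ℕ) :
    (1 - X ^ 2) * derivative ((1 - X : ℂ[X]) ^ n * (1 + X) ^ m) =
      (C ((m : ℂ) - n) - C ((n : ℂ) + m) * X) * ((1 - X) ^ n * (1 + X) ^ m) := by
  have h1 : derivative ((1 - X : ℂ[X])) = -1 := by simp
  have h2 : derivative ((1 + X : ℂ[X])) = 1 := by simp
  rw [derivative_mul, derivative_pow, derivative_pow, h1, h2]
  have e1 := stmt10_pow_pred (1 - X) n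
  have e2 := stmt10_pow_pred (1 + X) m
  have hc1 : (C ((m : ℂ) - n) : ℂ[X]) = C (m : ℂ) - C (n : ℂ) := by rw [map_sub]
  have hc2 : (C ((n : ℂ) + m) : ℂ[X]) = C (n : ℂ) + C (m : ℂ) := by rw [map_add]
  rw [hc1, hc2]
  linear_combination (-(1 + X) * (1 + X) ^ m) * e1 + ((1 - X) * (1 - X) ^ n) * e2

private lemma stmt10_sumA (n : ℕ) :
    ∑ j ∈ range (n + 1), (-2 : ℂ) ^ j * (n.choose j : ℂ) = (-1 : ℂ) ^ n := by
  have h := add_pow (-2 : ℂ) 1 n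
  simp only [one_pow, mul_one] at h
  norm_num at h
  rw [← h]

private lemma stmt10_sum_id (D n : ℕ) :
    ∑ j ∈ range (n + 1), (-2 : ℂ) ^ j * ((D : ℂ) - j) * (n.choose j : ℂ) =
      (-1 : ℂ) ^ n * ((D : ℂ) - 2 * n) := by
  induction n with
  | zero => simp
  | succ n ih =>
    set g : ℕ → ℂ := fun j => (-2 : ℂ) ^ j * ((D : ℂ) - j) * (n.choose j : ℂ) with hg
    have hsplit : ∀ j ∈ range (n + 1),
        (-2 : ℂ) ^ (j + 1) * ((D : ℂ) - (j + 1 : ℕ)) * (((n + 1).choose (j + 1) : ℕ) : ℂ) =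
          (-2 * g j + 2 * ((-2 : ℂ) ^ j * (n.choose j : ℂ))) + g (j + 1) := by
      intro j _
      rw [Nat.choose_succ_succ]
      simp only [hg]
      push_cast
      ring
    rw [Finset.sum_range_succ' _ (n + 1)]
    rw [Finset.sum_congr rfl hsplit]
    rw [Finset.sum_add_distrib, Finset.sum_add_distrib]
    have hB : (∑ j ∈ range (n + 1), g (j + 1)) + g 0 = ∑ j ∈ range (n + 2), g j :=
      (Finset.sum_range_succ' g (n + 1)).symm
    have hgtop : g (n + 1) = 0 := by simp [hg, Nat.choose_succ_self]
    have hB2 : ∑ j ∈ range (n + 2), g j = ∑ j ∈ range (n + 1), g j := by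
      rw [Finset.sum_range_succ, hgtop, add_zero]
    have hA := stmt10_sumA n
    have hS : ∑ j ∈ range (n + 1), g j = (-1 : ℂ) ^ n * ((D : ℂ) - 2 * n) := ih
    have hg0 : g 0 = (D : ℂ) := by simp [hg]
    have hm2 : ∑ j ∈ range (n + 1), -2 * g j = -2 * ∑ j ∈ range (n + 1), g j := by
      rw [Finset.mul_sum]
    have hm3 : ∑ j ∈ range (n + 1), 2 * ((-2 : ℂ) ^ j * (n.choose j : ℂ)) =
        2 * ∑ j ∈ range (n + 1), (-2 : ℂ) ^ j * (n.choose j : ℂ) := by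
      rw [Finset.mul_sum]
    have hgoal0 : (-2 : ℂ) ^ 0 * ((D : ℂ) - (0 : ℕ)) * (((n + 1).choose 0 : ℕ) : ℂ) = (D : ℂ) := by
      simp
    rw [hm2, hm3, hgoal0, hA, hS]
    have hBval : (∑ j ∈ range (n + 1), g (j + 1)) = (-1 : ℂ) ^ n * ((D : ℂ) - 2 * n) - (D : ℂ) := by
      have := hB
      rw [hB2, hS, hg0] at this
      linear_combination this
    rw [hBval]
    push_cast
    ring

theorem stmt10 (D : ℕ) (hD : 3 ≤ D) (v : ℕ → Polynomial ℂ)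
    (hv0 : v 0 = 1) (hv1 : v 1 = Polynomial.X)
    (hrec : ∀ i : ℕ, 1 ≤ i → i ≤ D - 1 →
      Polynomial.X * v i =
        Polynomial.C ((D : ℂ) - i + 1) * v (i - 1) + Polynomial.C ((i : ℂ) + 1) * v (i + 1)) :
    ∀ n ≤ D,
      (v (D - 1)).eval ((D : ℂ) - 2 * n) = (-1 : ℂ) ^ n * ((D : ℂ) - 2 * n) ∧
      ∑ j ∈ Finset.range D, (-2 : ℂ) ^ j * ((D : ℂ) - j) * (n.choose j : ℂ) =
        (-1 : ℂ) ^ n * ((D : ℂ) - 2 * n) := by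
  intro n hn
  -- the generating polynomial
  set f : ℂ[X] := (1 - X) ^ n * (1 + X) ^ (D - n) with hf
  have hcast : ((D - n : ℕ) : ℂ) = (D : ℂ) - n := by
    push_cast [Nat.cast_sub hn]; ring
  have key : (1 - X ^ 2) * derivative f =
      (C ((D : ℂ) - 2 * n) - C (D : ℂ) * X) * f := by
    have := stmt10_key n (D - n)
    rw [hcast] at this
    have h1 : ((D : ℂ) - n) - n = (D : ℂ) - 2 * n := by ring
    have h2 : (n : ℂ) + ((D : ℂ) - n) = (D : ℂ) := by ring
    rw [h1, h2] at this
    exact this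
  -- coefficient recurrence, valid for all i ≥ 1
  have krec : ∀ i : ℕ, 1 ≤ i →
      ((i : ℂ) + 1) * f.coeff (i + 1) =
        ((D : ℂ) - 2 * n) * f.coeff i - ((D : ℂ) - i + 1) * f.coeff (i - 1) := by
    intro i hi
    obtain ⟨j, rfl⟩ : ∃ j, i = j + 1 := ⟨i - 1, by omega⟩
    have H := congrArg (fun p : ℂ[X] => p.coeff (j + 1)) key
    simp only [sub_mul, one_mul, coeff_sub] at H
    rw [X_pow_mul, coeff_mul_X_pow'] at H
    rw [coeff_C_mul, mul_assoc, coeff_C_mul, coeff_X_mul, coeff_derivative] at H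
    cases j with
    | zero =>
      norm_num at H ⊢
      linear_combination H
    | succ l =>
      rw [if_pos (by omega : 2 ≤ l + 1 + 1)] at H
      have hsub : l + 1 + 1 - 2 = l := by omega
      rw [hsub, coeff_derivative] at H
      simp only [Nat.add_sub_cancel]
      push_cast at H ⊢
      linear_combination H
  -- values at the top
  have hone : (1 - X : ℂ[X]).natDegree = 1 := by
    have : (1 - X : ℂ[X]) = -(X - C 1) := by rw [C_1]; ring
    rw [this, natDegree_neg, natDegree_X_sub_C]
  have htwo : (1 + X : ℂ[X]).natDegree = 1 := by
    have : (1 + X : ℂ[X]) = X + C 1 := by rw [C_1]; ring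
    rw [this, natDegree_X_add_C]
  have hlc1 : (1 - X : ℂ[X]).leadingCoeff = -1 := by
    rw [leadingCoeff, hone]; simp [coeff_one]
  have hlc2 : (1 + X : ℂ[X]).leadingCoeff = 1 := by
    rw [leadingCoeff, htwo]; simp [coeff_one]
  have hne1 : (1 - X : ℂ[X]) ≠ 0 := by
    intro h
    rw [h] at hlc1
    simp at hlc1
  have hne2 : (1 + X : ℂ[X]) ≠ 0 := by
    intro h
    rw [h] at hlc2
    simp at hlc2
  have hdeg : f.natDegree = D := by
    rw [hf, natDegree_mul (pow_ne_zero _ hne1) (pow_ne_zero _ hne2),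
      natDegree_pow, natDegree_pow, hone, htwo]
    omega
  have hkD : f.coeff D = (-1 : ℂ) ^ n := by
    have h := coeff_mul_degree_add_degree ((1 - X : ℂ[X]) ^ n) ((1 + X : ℂ[X]) ^ (D - n))
    rw [natDegree_pow, natDegree_pow, hone, htwo, leadingCoeff_pow, leadingCoeff_pow,
      hlc1, hlc2] at h
    have : n * 1 + (D - n) * 1 = D := by omega
    rw [this] at h
    rw [hf, h]; simp
  have hkD1 : f.coeff (D + 1) = 0 :=
    coeff_eq_zero_of_natDegree_lt (by omega)
  -- coeff (D-1)
  have hkDm1 : f.coeff (D - 1) = (-1 : ℂ) ^ n * ((D : ℂ) - 2 * n) := by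
    have h := krec D (by omega)
    rw [hkD1, hkD] at h
    have : ((D : ℂ) - D + 1) = 1 := by ring
    rw [this] at h
    linear_combination h
  -- low coefficients
  have hk0 : f.coeff 0 = 1 := by
    rw [coeff_zero_eq_eval_zero, hf]; simp
  have hk1 : f.coeff 1 = (D : ℂ) - 2 * n := by
    have H := congrArg (fun p : ℂ[X] => p.coeff 0) key
    simp only [sub_mul, one_mul, coeff_sub, mul_coeff_zero, coeff_X_pow, coeff_X_zero,
      coeff_C_zero, coeff_derivative, hk0] at H
    norm_num at H
    linear_combination H
  -- main induction: eval of v i equals coeff i of f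
  have main : ∀ i, i ≤ D → (v i).eval ((D : ℂ) - 2 * n) = f.coeff i := by
    intro i
    induction i using Nat.strong_induction_on with
    | _ i ih =>
      match i with
      | 0 => intro _; rw [hv0, hk0]; simp
      | 1 => intro _; rw [hv1, hk1]; simp
      | (j + 2) =>
        intro hle
        have h0 := ih j (by omega) (by omega)
        have h1 := ih (j + 1) (by omega) (by omega)
        have hr := hrec (j + 1) (by omega) (by omega)
        have he := congrArg (fun p : ℂ[X] => p.eval ((D : ℂ) - 2 * n)) hr
        simp only [eval_mul, eval_add, eval_C, eval_X, Nat.add_sub_cancel] at he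
        rw [h0, h1] at he
        have hk := krec (j + 1) (by omega)
        simp only [Nat.add_sub_cancel] at hk
        have hj2 : ((j : ℂ) + 1 + 1) ≠ 0 := by
          have h' : ((j + 2 : ℕ) : ℂ) ≠ 0 := Nat.cast_ne_zero.mpr (by omega)
          intro hc
          apply h'
          push_cast
          linear_combination hc
        push_cast at he hk
        have key2 : ((j : ℂ) + 1 + 1) * (v (j + 2)).eval ((D : ℂ) - 2 * n) =
            ((j : ℂ) + 1 + 1) * f.coeff (j + 2) := by
          linear_combination -he - hk
        exact mul_left_cancel₀ hj2 key2
  constructor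
  · have h := main (D - 1) (by omega)
    rw [h]
    have : (((D - 1 : ℕ) : ℕ)) = D - 1 := rfl
    rw [hkDm1]
  · have h := stmt10_sum_id D n
    have hDterm : (-2 : ℂ) ^ D * ((D : ℂ) - (D : ℕ)) * (n.choose D : ℂ) = 0 := by
      simp
    have hext : ∑ j ∈ Finset.range (D + 1), (-2 : ℂ) ^ j * ((D : ℂ) - j) * (n.choose j : ℂ) =
        ∑ j ∈ Finset.range (n + 1), (-2 : ℂ) ^ j * ((D : ℂ) - j) * (n.choose j : ℂ) := by
      symm
      apply Finset.sum_subset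
      · intro x hx
        simp only [Finset.mem_range] at hx ⊢
        omega
      · intro x _ hx
        simp only [Finset.mem_range, not_lt] at hx
        rw [Nat.choose_eq_zero_of_lt (by omega)]
        simp
    have hDfull : ∑ j ∈ Finset.range (D + 1), (-2 : ℂ) ^ j * ((D : ℂ) - j) * (n.choose j : ℂ) =
        (∑ j ∈ Finset.range D, (-2 : ℂ) ^ j * ((D : ℂ) - j) * (n.choose j : ℂ)) + 0 := by
      rw [Finset.sum_range_succ, hDterm]
    rw [add_zero] at hDfull
    rw [← hDfull, hext, h]
end

section
/- Suppose D is odd. Let 𝐄_0, …, 𝐄_D ∈ Mat_{𝔽₂^D}(ℂ) satisfy Σ_{i=0}^D 𝐄_i = I and 𝐀·𝐄_i = (D−2i)·𝐄_i for all i, and let E_0, …, E_{(D−1)/2} ∈ Mat_X(ℂ) satisfy Σ_i E_i = I and A·E_i = θ_i·E_i for all i, where θ_i = ((D−2i)² − D)/2. Then for each 0 ≤ i ≤ (D−1)/2, the matrix E_i equals the submatrix of 𝐄_i + 𝐄_{D−i} obtained by restricting rows and columns to X. -/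
open Matrix

/-- Adjacency matrix of the hypercube `H(D,2)`. -/
noncomputable def adjCube (D : ℕ) : Matrix (Vtx D) (Vtx D) ℂ :=
  fun y z => if hammingNorm (y - z) = 1 then 1 else 0

/-! Squaring the hypercube gives `𝐀² = D • 1 + 2 • A₂`, where `A₂` is the distance-2 matrix of
`H(D,2)`, so every `𝐄_i` is an eigenmatrix of `A₂` for `θ_i = ((D - 2i)² - D) / 2`, and
`θ_i = θ_{D-i}`. Distance 2 preserves parity, so the even-weight block of `A₂ M` is `A` times the
even-weight block of `M`; hence the even blocks of the `𝐄_i + 𝐄_{D-i}`, `i ≤ (D-1)/2`, again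
resolve the identity into eigenmatrices of `A`. For odd `D` these `θ_i` are distinct, and then
such a resolution is unique: its members are the Lagrange interpolation polynomials in `A`. -/

open Finset Polynomial

section Lagrange

variable {ι K R : Type*} [Field K] [Ring R] [Algebra K R]

theorem aeval_mul_eq_eval_smul {a e : R} {μ : K} (h : a * e = μ • e) (p : K[X]) :
    aeval a p * e = p.eval μ • e := by
  induction p using Polynomial.induction_on with
  | C c => simp [Algebra.algebraMap_eq_smul_one]
  | add p q hp hq => simp [add_mul, hp, hq, add_smul]
  | monomial n c ih =>
    rw [pow_succ, ← mul_assoc, map_mul, aeval_X, mul_assoc, h, mul_smul_comm, ih, smul_smul,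
      eval_mul_X, mul_comm]

theorem eq_aeval_lagrangeBasis [DecidableEq ι] {a : R} {s : Finset ι} {θ : ι → K}
    (hθ : Set.InjOn θ s) {e : ι → R} (hsum : ∑ j ∈ s, e j = 1)
    (heig : ∀ j ∈ s, a * e j = θ j • e j) {i : ι} (hi : i ∈ s) :
    e i = aeval a (Lagrange.basis s θ i) := by
  calc e i = ∑ j ∈ s, (Lagrange.basis s θ i).eval (θ j) • e j := by
        rw [sum_eq_single_of_mem i hi fun j hj hji => by
          rw [Lagrange.eval_basis_of_ne hji.symm hj, zero_smul],
          Lagrange.eval_basis_self hθ hi, one_smul]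
    _ = ∑ j ∈ s, aeval a (Lagrange.basis s θ i) * e j :=
        sum_congr rfl fun j hj => (aeval_mul_eq_eval_smul (heig j hj) _).symm
    _ = aeval a (Lagrange.basis s θ i) := by rw [← mul_sum, hsum, mul_one]

end Lagrange

theorem sum_range_add_reflect {M : Type*} [AddCommMonoid M] (f : ℕ → M) (m : ℕ) :
    ∑ i ∈ range (m + 1), (f i + f (2 * m + 1 - i)) = ∑ i ∈ range (2 * m + 1 + 1), f i := by
  rw [sum_add_distrib, show 2 * m + 1 + 1 = (m + 1) + (m + 1) by ring,
    sum_range_add f (m + 1) (m + 1), ← sum_range_reflect (fun k => f (m + 1 + k))]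
  congr 1
  exact sum_congr rfl fun i hi => by rw [mem_range] at hi; congr 1; omega

theorem sum_range_submatrix_add_reflect {α β R : Type*} [DecidableEq α] [DecidableEq β]
    [Semiring R] {D : ℕ} (hD : Odd D) {P : ℕ → Matrix α α R} (hP : ∑ i ∈ range (D + 1), P i = 1)
    {e : β → α} (he : Function.Injective e) :
    ∑ i ∈ range ((D - 1) / 2 + 1), (P i + P (D - i)).submatrix e e = 1 := by
  obtain ⟨m, rfl⟩ := hD
  have hm : (2 * m + 1 - 1) / 2 = m := by omega
  have hrestrict : ∑ i ∈ range (m + 1), (P i + P (2 * m + 1 - i)).submatrix e e =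
      (∑ i ∈ range (m + 1), (P i + P (2 * m + 1 - i))).submatrix e e := by
    ext y z
    simp only [Matrix.sum_apply, submatrix_apply]
  rw [hm, hrestrict, sum_range_add_reflect, hP, submatrix_one _ he]

section HammingZModTwo

variable {ι : Type*} [Fintype ι]

theorem ZMod.two_eq_zero_or_eq_one (a : ZMod 2) : a = 0 ∨ a = 1 := by
  revert a
  decide

theorem hammingNorm_eq_one_iff [DecidableEq ι] {x : ι → ZMod 2} :
    hammingNorm x = 1 ↔ ∃ j, x = Pi.single j 1 := by
  simp only [hammingNorm, card_eq_one, Finset.ext_iff, funext_iff, mem_filter, mem_univ,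
    true_and, mem_singleton, Pi.single_apply]
  refine exists_congr fun j => forall_congr' fun i => ?_
  by_cases hij : i = j
  · subst hij
    rcases ZMod.two_eq_zero_or_eq_one (x i) with h | h <;> simp [h]
  · rcases ZMod.two_eq_zero_or_eq_one (x i) with h | h <;> simp [h, hij]

theorem natCast_hammingNorm (x : ι → ZMod 2) : (hammingNorm x : ZMod 2) = ∑ i, x i := by
  rw [hammingNorm, card_filter]
  push_cast
  exact sum_congr rfl fun i _ => by rcases ZMod.two_eq_zero_or_eq_one (x i) with h | h <;> simp [h]

theorem even_hammingNorm_sub_iff (x y : ι → ZMod 2) :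
    Even (hammingNorm (x - y)) ↔ (Even (hammingNorm x) ↔ Even (hammingNorm y)) := by
  simp only [← ZMod.natCast_eq_zero_iff_even, natCast_hammingNorm, Pi.sub_apply, sum_sub_distrib]
  generalize ∑ i, x i = a
  generalize ∑ i, y i = b
  revert a b
  decide

theorem hammingNorm_add_single_one [DecidableEq ι] (v : ι → ZMod 2) (j : ι) :
    hammingNorm (v + Pi.single j 1) =
      if v j = 0 then hammingNorm v + 1 else hammingNorm v - 1 := by
  have hsplit (x : ι → ZMod 2) : hammingNorm x =
      (if x j ≠ 0 then 1 else 0) + ∑ i ∈ univ.erase j, if x i ≠ 0 then 1 else 0 := by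
    simp only [hammingNorm, card_filter]
    exact (add_sum_erase _ _ (mem_univ j)).symm
  have hrest : ∑ i ∈ univ.erase j, (if (v + Pi.single j 1 : ι → ZMod 2) i ≠ 0 then 1 else 0) =
      ∑ i ∈ univ.erase j, if v i ≠ 0 then 1 else 0 :=
    sum_congr rfl fun i hi => by simp [ne_of_mem_erase hi]
  rw [hsplit v, hsplit (v + _), hrest]
  generalize (∑ i ∈ univ.erase j, if v i ≠ 0 then 1 else 0) = rest
  rcases ZMod.two_eq_zero_or_eq_one (v j) with h | h
  · simp [h, add_comm]
  · simp [h, show (1 + 1 : ZMod 2) = 0 from rfl]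

theorem card_hammingNorm_add_single_one_eq_one [DecidableEq ι] (v : ι → ZMod 2) :
    #{j | hammingNorm (v + Pi.single j 1) = 1} =
      if v = 0 then Fintype.card ι else if hammingNorm v = 2 then 2 else 0 := by
  by_cases hv : v = 0
  · subst hv
    rw [if_pos rfl, filter_true_of_mem fun j _ => hammingNorm_eq_one_iff.2 ⟨j, zero_add _⟩,
      card_univ]
  have hpos : hammingNorm v ≠ 0 := hammingNorm_ne_zero_iff.2 hv
  have hfilter : univ.filter (fun j => hammingNorm (v + Pi.single j 1) = 1) =
      univ.filter (fun j => v j ≠ 0 ∧ hammingNorm v = 2) := by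
    ext j
    simp only [mem_filter, mem_univ, true_and, hammingNorm_add_single_one]
    by_cases h : v j = 0
    · simp [h, hpos]
    · simp only [h, if_false, ne_eq, not_false_eq_true, true_and]
      omega
  rw [if_neg hv, hfilter]
  split_ifs with h2
  · simp only [h2, and_true]
    exact h2
  · simp [h2]

end HammingZModTwo

section HalvedCube

variable {D : ℕ}

noncomputable def adjCubeDistTwo (D : ℕ) : Matrix (Vtx D) (Vtx D) ℂ :=
  fun y z => if hammingNorm (y - z) = 2 then 1 else 0

theorem adjCube_mul_apply (M : Matrix (Vtx D) (Vtx D) ℂ) (y z : Vtx D) :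
    (adjCube D * M) y z = ∑ j, M (y + Pi.single j 1) z := by
  have hnbrs : univ.filter (fun u => hammingNorm (y - u) = 1) =
      univ.image (fun j => y + Pi.single j 1) := by
    ext u
    simp only [mem_filter, mem_univ, true_and, mem_image, hammingNorm_eq_one_iff]
    exact exists_congr fun j => by
      rw [sub_eq_iff_eq_add', ← sub_eq_iff_eq_add, ZModModule.sub_eq_add]
  have hinj : Function.Injective (fun j : Fin D => y + Pi.single j (1 : ZMod 2)) := fun j k h => by
    simpa [Pi.single_apply] using congrFun (add_left_cancel h) j
  simp only [mul_apply, adjCube, ite_mul, one_mul, zero_mul, ← sum_filter, hnbrs,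
    sum_image fun j _ k _ h => hinj h]

theorem adjCube_mul_adjCube :
    adjCube D * adjCube D = (D : ℂ) • 1 + (2 : ℂ) • adjCubeDistTwo D := by
  ext y z
  have hshift (j : Fin D) : y + Pi.single j 1 - z = (y - z) + Pi.single j 1 := by abel
  simp only [adjCube_mul_apply, adjCube, hshift, ← sum_filter, sum_const, nsmul_eq_mul, mul_one,
    card_hammingNorm_add_single_one_eq_one, Matrix.add_apply, Matrix.smul_apply, one_apply,
    adjCubeDistTwo, sub_eq_zero, Fintype.card_fin, smul_eq_mul]
  split_ifs <;> simp_all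

theorem adjCubeDistTwo_mul_eq_smul {M : Matrix (Vtx D) (Vtx D) ℂ} {μ : ℂ}
    (h : adjCube D * M = μ • M) : adjCubeDistTwo D * M = ((μ ^ 2 - D) / 2) • M := by
  have hsq : (adjCube D * adjCube D) * M = μ ^ 2 • M := by
    rw [Matrix.mul_assoc, h, Matrix.mul_smul, h, smul_smul, sq]
  rw [adjCube_mul_adjCube, add_mul, smul_mul, smul_mul, one_mul] at hsq
  linear_combination (norm := module) (2⁻¹ : ℂ) • hsq

theorem adjHalf_mul_submatrix (M : Matrix (Vtx D) (Vtx D) ℂ) :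
    adjHalf D * M.submatrix (↑) (↑) =
      (adjCubeDistTwo D * M).submatrix ((↑) : HVtx D → Vtx D) (↑) := by
  have hodd : (adjCubeDistTwo D).toBlock (fun x => Even (hammingNorm x))
      (fun x => ¬Even (hammingNorm x)) = 0 := by
    ext ⟨y, hy⟩ ⟨u, hu⟩
    have : hammingNorm (y - u) ≠ 2 := fun h2 =>
      hu ((even_hammingNorm_sub_iff y u).1 (by rw [h2]; exact even_two) |>.1 hy)
    simp [toBlock_apply, adjCubeDistTwo, this]
  have := toBlock_mul_eq_add (fun x => Even (hammingNorm x)) (fun x => Even (hammingNorm x))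
    (fun x => Even (hammingNorm x)) (adjCubeDistTwo D) M
  rw [hodd, Matrix.zero_mul, add_zero] at this
  exact this.symm

theorem adjHalf_mul_submatrix_add_reflect {E' : ℕ → Matrix (Vtx D) (Vtx D) ℂ}
    (heig' : ∀ i ≤ D, adjCube D * E' i = ((D : ℂ) - 2 * i) • E' i) {i : ℕ} (hi : i ≤ D) :
    adjHalf D * (E' i + E' (D - i)).submatrix (↑) (↑) =
      ((((D : ℂ) - 2 * i) ^ 2 - D) / 2) • (E' i + E' (D - i)).submatrix (↑) (↑) := by
  rw [adjHalf_mul_submatrix, Matrix.mul_add, adjCubeDistTwo_mul_eq_smul (heig' i hi),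
    adjCubeDistTwo_mul_eq_smul (heig' (D - i) (Nat.sub_le D i)), Nat.cast_sub hi,
    show ((D : ℂ) - 2 * (D - i)) ^ 2 = ((D : ℂ) - 2 * i) ^ 2 by ring, ← smul_add]
  rfl

end HalvedCube

theorem injOn_halvedCube_eigenvalue (D : ℕ) :
    Set.InjOn (fun i : ℕ => (((D : ℂ) - 2 * i) ^ 2 - D) / 2) (range ((D - 1) / 2 + 1)) := by
  intro a ha b hb hab
  simp only [coe_range, Set.mem_Iio] at ha hb
  have hfac : ((a : ℂ) - b) * ((D : ℂ) - a - b) = 0 := by linear_combination (-1 / 2 : ℂ) * hab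
  rcases mul_eq_zero.1 hfac with h | h
  · exact_mod_cast sub_eq_zero.1 h
  · have hD : (D : ℂ) = (a + b : ℕ) := by push_cast; linear_combination h
    norm_cast at hD
    omega

theorem stmt11_general (D : ℕ) (hDodd : Odd D)
    (E' : ℕ → Matrix (Vtx D) (Vtx D) ℂ)
    (hsum' : ∑ i ∈ Finset.range (D + 1), E' i = 1)
    (heig' : ∀ i ≤ D, adjCube D * E' i = ((D : ℂ) - 2 * i) • E' i)
    (E : ℕ → Matrix (HVtx D) (HVtx D) ℂ)
    (hsum : ∑ i ∈ Finset.range ((D - 1) / 2 + 1), E i = 1)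
    (heig : ∀ i ≤ (D - 1) / 2,
      adjHalf D * E i = (((((D : ℂ) - 2 * i)) ^ 2 - D) / 2) • E i) :
    ∀ i ≤ (D - 1) / 2, ∀ y z : HVtx D,
      E i y z = (E' i + E' (D - i)) y.val z.val := by
  intro i hi y z
  have hθ := injOn_halvedCube_eigenvalue D
  have hF_eig (j : ℕ) (hj : j ∈ range ((D - 1) / 2 + 1)) :=
    adjHalf_mul_submatrix_add_reflect heig' (i := j) (by rw [mem_range] at hj; omega)
  rw [eq_aeval_lagrangeBasis hθ hsum (fun j hj => heig j (mem_range_succ_iff.1 hj))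
      (mem_range_succ_iff.2 hi),
    ← eq_aeval_lagrangeBasis hθ (sum_range_submatrix_add_reflect hDodd hsum'
      Subtype.val_injective) hF_eig (mem_range_succ_iff.2 hi)]
  rfl

theorem stmt11 (D : ℕ) (hD : 3 ≤ D) (hDodd : Odd D)
    (E' : ℕ → Matrix (Vtx D) (Vtx D) ℂ)
    (hsum' : ∑ i ∈ Finset.range (D + 1), E' i = 1)
    (heig' : ∀ i ≤ D, adjCube D * E' i = ((D : ℂ) - 2 * i) • E' i)
    (E : ℕ → Matrix (HVtx D) (HVtx D) ℂ)
    (hsum : ∑ i ∈ Finset.range ((D - 1) / 2 + 1), E i = 1)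
    (heig : ∀ i ≤ (D - 1) / 2,
      adjHalf D * E i = (((((D : ℂ) - 2 * i)) ^ 2 - D) / 2) • E i) :
    ∀ i ≤ (D - 1) / 2, ∀ y z : HVtx D,
      E i y z = (E' i + E' (D - i)) y.val z.val :=
  stmt11_general D hDodd E' hsum' heig' E hsum heig
end

section
/- The set of eigenvalues (the spectrum) of the adjacency matrix A of the halved cube ½H(D,2) equals { ((D−2i)² − D)/2 : 0 ≤ i ≤ ⌊D/2⌋ }, and these ⌊D/2⌋ + 1 values are pairwise distinct. -/
open Matrix

/-! The Walsh characters `χ_s x = (-1) ^ (s ⬝ᵥ x)` of `(ZMod 2)^D`, restricted to the even-weight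
vectors, are eigenvectors of `A`: the neighbours of `y` are the `y + e` with `e` of weight 2, so
`A χ_s = (∑_{|e| = 2} χ_s e) χ_s`. With `a_j = (-1) ^ s_j` this sum is the elementary symmetric
function `e₂(a) = ((∑ a_j)² - ∑ a_j²) / 2 = ((D - 2|s|)² - D) / 2`. Conversely, `A` is symmetric,
so an eigenvector for any other value is orthogonal to all restricted characters; by character
orthogonality these span all functions on the halved cube, so it vanishes. The value for `|s|`
equals that for `D - |s|`, and `i ↦ (D - 2i)²` is injective on `0 ≤ i ≤ D/2`. -/

open Finset

lemma AddChar.map_sum_eq_prod {ι A M : Type*} [AddCommMonoid A] [CommMonoid M]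
    (ψ : AddChar A M) (s : Finset ι) (f : ι → A) : ψ (∑ i ∈ s, f i) = ∏ i ∈ s, ψ (f i) := by
  simpa only [← ofAdd_sum, AddChar.toMonoidHom_apply, toAdd_ofAdd] using
    map_prod ψ.toMonoidHom (fun i => Multiplicative.ofAdd (f i)) s

lemma two_mul_sum_powersetCard_two {ι R : Type*} [Fintype ι] [CommRing R] (a : ι → R) :
    2 * ∑ S ∈ powersetCard 2 univ, ∏ j ∈ S, a j = (∑ j, a j) ^ 2 - ∑ j, a j ^ 2 := by
  have newton := MvPolynomial.mul_esymm_eq_sum ι R 2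
  rw [show {p ∈ antidiagonal 2 | p.1 < 2} = {(0, 2), (1, 1)} by decide, sum_pair (by decide),
    MvPolynomial.esymm_zero, MvPolynomial.esymm_one, MvPolynomial.psum_one] at newton
  have h := congrArg (MvPolynomial.aeval a) newton
  simp only [MvPolynomial.esymm, MvPolynomial.psum, map_mul, map_add, map_sum, map_prod, map_pow,
    map_neg, map_one, map_natCast, MvPolynomial.aeval_X] at h
  linear_combination h

lemma Matrix.mem_spectrum_iff_exists_mulVec_eq_smul {K n : Type*} [Field K] [Fintype n]
    [DecidableEq n] (A : Matrix n n K) (μ : K) :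
    μ ∈ spectrum K A ↔ ∃ v ≠ 0, A *ᵥ v = μ • v := by
  rw [← Matrix.spectrum_toLin', ← Module.End.hasEigenvalue_iff_mem_spectrum,
    Module.End.hasEigenvalue_iff, Submodule.ne_bot_iff]
  simp [Matrix.toLin'_apply, and_comm]

lemma ZMod.eq_one_of_ne_zero_mod_two {a : ZMod 2} (ha : a ≠ 0) : a = 1 := by
  revert a
  decide

section ZModTwo

variable {ι : Type*}

lemma neg_eq_self_mod_two_pi (x : ι → ZMod 2) : -x = x :=
  funext fun j => ZMod.neg_eq_self_mod_two (x j)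

variable [Fintype ι]

lemma natCast_hammingNorm_eq_sum (x : ι → ZMod 2) : (hammingNorm x : ZMod 2) = ∑ j, x j := by
  have hx : ∀ j, x j = if x j ≠ 0 then 1 else 0 := fun j => by
    split_ifs with h
    exacts [ZMod.eq_one_of_ne_zero_mod_two h, not_not.mp h]
  rw [hammingNorm, Finset.sum_congr rfl fun j _ => hx j, Finset.sum_boole]

lemma even_hammingNorm_add_iff (x y : ι → ZMod 2) :
    Even (hammingNorm (x + y)) ↔ (Even (hammingNorm x) ↔ Even (hammingNorm y)) := by
  simp only [← ZMod.natCast_eq_zero_iff_even, natCast_hammingNorm_eq_sum, Pi.add_apply,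
    Finset.sum_add_distrib]
  generalize ∑ j, x j = a, ∑ j, y j = b
  revert a b
  decide

variable [DecidableEq ι]

def indicatorVec (S : Finset ι) : ι → ZMod 2 := fun j => if j ∈ S then 1 else 0

lemma hammingNorm_indicatorVec (S : Finset ι) : hammingNorm (indicatorVec S) = #S := by
  simp [hammingNorm, indicatorVec]

def finsetEquivZModTwo : Finset ι ≃ (ι → ZMod 2) where
  toFun := indicatorVec
  invFun x := {j | x j ≠ 0}
  left_inv S := by ext j; simp [indicatorVec]
  right_inv x := by
    funext j
    simp only [indicatorVec, mem_filter, mem_univ, true_and]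
    split_ifs with h
    exacts [(ZMod.eq_one_of_ne_zero_mod_two h).symm, (not_not.mp h).symm]

lemma sum_filter_hammingNorm_eq_sum_powersetCard {M : Type*} [AddCommMonoid M] (k : ℕ)
    (f : (ι → ZMod 2) → M) :
    ∑ x with hammingNorm x = k, f x = ∑ S ∈ powersetCard k univ, f (indicatorVec S) :=
  (Finset.sum_equiv finsetEquivZModTwo (by simp [finsetEquivZModTwo, hammingNorm_indicatorVec])
    (fun _ _ => rfl)).symm

end ZModTwo

noncomputable def signChar : AddChar (ZMod 2) ℂ :=
  AddChar.zmodChar 2 (by norm_num : (-1 : ℂ) ^ 2 = 1)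

lemma signChar_one : signChar 1 = -1 := by
  rw [signChar, AddChar.zmodChar_apply]
  exact pow_one _

lemma signChar_sq (a : ZMod 2) : signChar a ^ 2 = 1 := by
  rw [← AddChar.map_nsmul_eq_pow, two_nsmul, ZModModule.add_self, AddChar.map_zero_eq_one]

section Walsh

variable {ι : Type*} [Fintype ι]

noncomputable def walshChar (s : ι → ZMod 2) : AddChar (ι → ZMod 2) ℂ :=
  signChar.compAddMonoidHom (AddMonoidHom.mk' (s ⬝ᵥ ·) (dotProduct_add s))

lemma walshChar_apply (s x : ι → ZMod 2) : walshChar s x = signChar (s ⬝ᵥ x) := rfl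

lemma walshChar_comm (s x : ι → ZMod 2) : walshChar s x = walshChar x s := by
  rw [walshChar_apply, walshChar_apply, dotProduct_comm]

lemma sum_signChar (s : ι → ZMod 2) :
    ∑ j, signChar (s j) = Fintype.card ι - 2 * hammingNorm s := by
  have h : ∀ j, signChar (s j) = 1 - 2 * if s j ≠ 0 then (1 : ℂ) else 0 := fun j => by
    split_ifs with h
    · rw [ZMod.eq_one_of_ne_zero_mod_two h, signChar_one]
      norm_num
    · rw [not_not.mp h, AddChar.map_zero_eq_one]
      norm_num
  rw [sum_congr rfl fun j _ => h j, sum_sub_distrib, ← mul_sum, sum_boole]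
  simp [hammingNorm]

variable [DecidableEq ι]

lemma walshChar_eq_zero_iff {x : ι → ZMod 2} : walshChar x = 0 ↔ x = 0 := by
  refine ⟨fun h => ?_, fun h => ?_⟩
  · by_contra hx
    obtain ⟨j, hj⟩ := Function.ne_iff.mp hx
    have := DFunLike.congr_fun h (Pi.single j 1)
    simp only [walshChar_apply, dotProduct_single, ZMod.eq_one_of_ne_zero_mod_two hj, mul_one,
      signChar_one, AddChar.zero_apply] at this
    norm_num at this
  · ext s
    simp [h, walshChar_apply]

lemma sum_walshChar (x : ι → ZMod 2) :
    ∑ s, walshChar s x = if x = 0 then 2 ^ Fintype.card ι else 0 := by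
  simp_rw [walshChar_comm _ x, AddChar.sum_eq_ite, walshChar_eq_zero_iff]
  simp

lemma sum_walshChar_mul_walshChar (x y : ι → ZMod 2) :
    ∑ s, walshChar s x * walshChar s y = if x = y then 2 ^ Fintype.card ι else 0 := by
  simp_rw [← AddChar.map_add_eq_mul, sum_walshChar, add_eq_zero_iff_eq_neg,
    neg_eq_self_mod_two_pi]

lemma walshChar_indicatorVec (s : ι → ZMod 2) (S : Finset ι) :
    walshChar s (indicatorVec S) = ∏ j ∈ S, signChar (s j) := by
  rw [walshChar_apply, ← AddChar.map_sum_eq_prod]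
  congr 1
  simp [dotProduct, indicatorVec]

lemma sum_walshChar_hammingNorm_eq_two (s : ι → ZMod 2) :
    ∑ e with hammingNorm e = 2, walshChar s e =
      (((Fintype.card ι : ℂ) - 2 * hammingNorm s) ^ 2 - Fintype.card ι) / 2 := by
  have h := two_mul_sum_powersetCard_two fun j => signChar (s j)
  simp only [signChar_sq, sum_const, card_univ, nsmul_one, sum_signChar] at h
  rw [sum_filter_hammingNorm_eq_sum_powersetCard]
  simp only [walshChar_indicatorVec]
  linear_combination h / 2

end Walsh

noncomputable def halvedCubeEigenvalue (D i : ℕ) : ℂ := (((D : ℂ) - 2 * i) ^ 2 - D) / 2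

lemma halvedCubeEigenvalue_sub {D i : ℕ} (h : i ≤ D) :
    halvedCubeEigenvalue D (D - i) = halvedCubeEigenvalue D i := by
  rw [halvedCubeEigenvalue, halvedCubeEigenvalue, Nat.cast_sub h]
  ring

lemma halvedCubeEigenvalue_injOn (D : ℕ) :
    Set.InjOn (halvedCubeEigenvalue D) (Set.Iic (D / 2)) := by
  intro i hi j hj h
  simp only [Set.mem_Iic] at hi hj
  have hfactor : ((i : ℂ) - j) * ((i + j : ℕ) - D) = 0 := by
    unfold halvedCubeEigenvalue at h
    push_cast
    linear_combination h / 2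
  rcases mul_eq_zero.mp hfactor with h | h
  · exact_mod_cast sub_eq_zero.mp h
  · have : i + j = D := by exact_mod_cast sub_eq_zero.mp h
    omega

lemma range_halvedCubeEigenvalue_hammingNorm (D : ℕ) :
    Set.range (fun s : Vtx D => halvedCubeEigenvalue D (hammingNorm s)) =
      halvedCubeEigenvalue D '' Set.Iic (D / 2) := by
  ext z
  constructor
  · rintro ⟨s, rfl⟩
    have hs : hammingNorm s ≤ D := by simpa using hammingNorm_le_card_fintype (x := s)
    by_cases h : hammingNorm s ≤ D / 2
    · exact ⟨_, h, rfl⟩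
    · refine ⟨D - hammingNorm s, ?_, halvedCubeEigenvalue_sub hs⟩
      simp only [Set.mem_Iic]
      omega
  · rintro ⟨i, hi, rfl⟩
    obtain ⟨S, -, hS⟩ := exists_subset_card_eq (s := (univ : Finset (Fin D))) (n := i)
      (by rw [card_univ, Fintype.card_fin]; exact (Set.mem_Iic.mp hi).trans (Nat.div_le_self D 2))
    exact ⟨indicatorVec S, by simp only [hammingNorm_indicatorVec, hS]⟩

variable {D : ℕ}

lemma adjHalf_isSymm : (adjHalf D).IsSymm :=
  IsSymm.ext fun y z => by simp only [adjHalf, ← neg_sub z.val, neg_eq_self_mod_two_pi]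

noncomputable def walshVec (s : Vtx D) : HVtx D → ℂ := fun y => walshChar s y.val

lemma walshVec_ne_zero (s : Vtx D) : walshVec s ≠ 0 := fun h => by
  simpa [walshVec] using congrFun h ⟨0, by simp⟩

lemma adjHalf_mulVec_walshVec (s : Vtx D) :
    adjHalf D *ᵥ walshVec s = halvedCubeEigenvalue D (hammingNorm s) • walshVec s := by
  funext y
  -- a vector at distance 2 from the even vector `y` is even, so the sum may run over all `x`
  have hsupp : ∀ x ∈ univ, (if hammingNorm (y.val - x) = 2 then walshChar s x else 0) ≠ 0 →
      Even (hammingNorm x) := by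
    intro x _ hx
    have h2 : hammingNorm (y.val + x) = 2 := by
      rw [← neg_eq_self_mod_two_pi x, ← sub_eq_add_neg]
      by_contra h
      simp [h] at hx
    exact (even_hammingNorm_add_iff y.val x).mp (by rw [h2]; decide) |>.mp y.2
  calc (adjHalf D *ᵥ walshVec s) y
      = ∑ z : HVtx D, if hammingNorm (y.val - z.val) = 2 then walshChar s z.val else 0 := by
        simp [mulVec, dotProduct, adjHalf, walshVec]
    _ = ∑ x, if hammingNorm (y.val - x) = 2 then walshChar s x else 0 := by
        rw [← sum_filter_of_ne hsupp,
          sum_subtype (p := fun x : Vtx D => Even (hammingNorm x)) _ (by simp)]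
    _ = ∑ e, if hammingNorm e = 2 then walshChar s (y.val + e) else 0 :=
        (Fintype.sum_equiv (Equiv.addLeft y.val) _ _ fun e => by
          simp [neg_eq_self_mod_two_pi]).symm
    _ = walshChar s y.val * ∑ e with hammingNorm e = 2, walshChar s e := by
        simp [sum_filter, mul_sum, AddChar.map_add_eq_mul]
    _ = _ := by
        rw [sum_walshChar_hammingNorm_eq_two]
        simp [walshVec, halvedCubeEigenvalue, mul_comm]

lemma eq_zero_of_forall_walshVec_dotProduct_eq_zero {v : HVtx D → ℂ}
    (h : ∀ s, walshVec s ⬝ᵥ v = 0) : v = 0 := by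
  funext y
  have key : ∑ s, walshChar s y.val * (walshVec s ⬝ᵥ v) = 2 ^ D * v y := by
    simp_rw [dotProduct, mul_sum, walshVec]
    rw [sum_comm]
    simp_rw [← mul_assoc, ← sum_mul, sum_walshChar_mul_walshChar]
    simp [Subtype.val_inj]
  simpa [h] using key

lemma spectrum_adjHalf :
    spectrum ℂ (adjHalf D) = Set.range fun s : Vtx D => halvedCubeEigenvalue D (hammingNorm s) := by
  ext μ
  rw [mem_spectrum_iff_exists_mulVec_eq_smul]
  constructor
  · rintro ⟨v, hv0, hv⟩
    by_contra hμ
    refine hv0 (eq_zero_of_forall_walshVec_dotProduct_eq_zero fun s => ?_)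
    have hne : halvedCubeEigenvalue D (hammingNorm s) - μ ≠ 0 :=
      sub_ne_zero.mpr fun h => hμ ⟨s, h⟩
    refine (mul_eq_zero.mp ?_).resolve_left hne
    calc (halvedCubeEigenvalue D (hammingNorm s) - μ) * (walshVec s ⬝ᵥ v)
        = (adjHalf D *ᵥ walshVec s) ⬝ᵥ v - walshVec s ⬝ᵥ (adjHalf D *ᵥ v) := by
          rw [adjHalf_mulVec_walshVec, hv, smul_dotProduct, dotProduct_smul, smul_eq_mul,
            smul_eq_mul]
          ring
      _ = 0 := by
          rw [dotProduct_mulVec, ← vecMul_transpose, adjHalf_isSymm.eq, sub_self]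
  · rintro ⟨s, rfl⟩
    exact ⟨walshVec s, walshVec_ne_zero s, adjHalf_mulVec_walshVec s⟩

theorem stmt16_general (D : ℕ) :
    spectrum ℂ (adjHalf D) =
      {z : ℂ | ∃ i : ℕ, i ≤ D / 2 ∧ z = (((D : ℂ) - 2 * i) ^ 2 - D) / 2} ∧
    ∀ i ≤ D / 2, ∀ j ≤ D / 2,
      (((D : ℂ) - 2 * i) ^ 2 - D) / 2 = (((D : ℂ) - 2 * j) ^ 2 - D) / 2 → i = j := by
  refine ⟨?_, fun i hi j hj h => halvedCubeEigenvalue_injOn D hi hj h⟩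
  rw [spectrum_adjHalf, range_halvedCubeEigenvalue_hammingNorm]
  ext z
  simp [halvedCubeEigenvalue, eq_comm]

theorem stmt16 (D : ℕ) (hD : 3 ≤ D) :
    spectrum ℂ (adjHalf D) =
      {z : ℂ | ∃ i : ℕ, i ≤ D / 2 ∧ z = (((D : ℂ) - 2 * i) ^ 2 - D) / 2} ∧
    ∀ i ≤ D / 2, ∀ j ≤ D / 2,
      (((D : ℂ) - 2 * i) ^ 2 - D) / 2 = (((D : ℂ) - 2 * j) ^ 2 - D) / 2 → i = j :=
  stmt16_general D
end
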